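/- arXiv:1004.5230 — 7 statements merged into one kernel-verified Lean document; each statement's English description precedes it below -/
import Mathlib

section
/- If G is a finite twin-free graph with at least one edge on n vertices, then G admits an identifying code of size at most n-1. -/
open SimpleGraph

/-- The closed ball of radius 1 (closed neighborhood) of `x`. -/
def ball {V : Type*} (G : SimpleGraph V) (x : V) : Set V := {y | y = x ∨ G.Adj x y}

/-- `C` separates every pair of distinct vertices. -/
def IsSeparating {V : Type*} (G : SimpleGraph V) (C : Set V) : Prop :=
  ∀ x y : V, x ≠ y → _root_.ball G x ∩ C ≠ _root_.ball G y ∩ C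

/-- `C` is an identifying code of `G`. -/
def IsIdCode {V : Type*} (G : SimpleGraph V) (C : Set V) : Prop :=
  (∀ x : V, (_root_.ball G x ∩ C).Nonempty) ∧ IsSeparating G C

/-- A graph is twin-free if distinct vertices have distinct closed neighborhoods. -/
def TwinFree {V : Type*} (G : SimpleGraph V) : Prop :=
  ∀ x y : V, _root_.ball G x = _root_.ball G y → x = y

/-- The minimum size of an identifying code. -/
noncomputable def gammaID {V : Type*} (G : SimpleGraph V) : ℕ :=
  sInf {n | ∃ C : Set V, IsIdCode G C ∧ C.ncard = n}

/-- The minimum size of a separating set. -/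
noncomputable def gammaS {V : Type*} (G : SimpleGraph V) : ℕ :=
  sInf {n | ∃ C : Set V, IsSeparating G C ∧ C.ncard = n}

/-!
Some vertex `v` has `V \ {v}` as an identifying code (Gravier–Moncel).
Otherwise, for every non-isolated `v` there are distinct `x, y` whose closed balls differ
exactly at `v`; they are adjacent, hence non-isolated too. Over `𝔽₂`, with `N` the symmetric
closed-neighbourhood matrix and `d_v = e_x + e_y`, this says `N d_v = e_v`. Symmetry of `N`
makes `(d_v)_w = d_v ⬝ N d_w = (d_w)_v`, so `D = ∑_v d_v` has `D_w = ∑_v (d_w)_v = 1 + 1 = 0`,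
whereas `N D` is the indicator of the non-isolated vertices, which is nonzero.
-/

open SimpleGraph Matrix

open scoped symmDiff

theorem Matrix.IsSymm.eq_empty_of_mulVec_eq_single {V R : Type*} [Fintype V] [DecidableEq V]
    [CommSemiring R] [Nontrivial R] {M : Matrix V V R} (hM : M.IsSymm) {S : Finset V}
    {d : V → V → R} (hd : ∀ v ∈ S, M *ᵥ d v = Pi.single v 1)
    (hsupp : ∀ v ∈ S, ∀ w ∉ S, d v w = 0) (hsum : ∀ v ∈ S, ∑ w ∈ S, d v w = 0) : S = ∅ := by
  set D := ∑ v ∈ S, d v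
  have hMD : M *ᵥ D = ∑ v ∈ S, Pi.single v 1 := by
    rw [mulVec_sum]
    exact Finset.sum_congr rfl hd
  have hD : D = 0 := by
    funext w
    by_cases hw : w ∈ S
    · calc D w = D ⬝ᵥ Pi.single w 1 := (dotProduct_single_one D w).symm
        _ = D ⬝ᵥ (M *ᵥ d w) := by rw [hd w hw]
        _ = (M *ᵥ D) ⬝ᵥ d w := by rw [dotProduct_mulVec, ← vecMul_transpose, hM.eq]
        _ = ∑ v ∈ S, d w v := by simp [hMD, sum_dotProduct]
        _ = 0 := hsum w hw
    · simp only [D, Finset.sum_apply, Pi.zero_apply]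
      exact Finset.sum_eq_zero fun v hv => hsupp v hv w hw
  by_contra hS
  obtain ⟨a, ha⟩ := Finset.nonempty_iff_ne_empty.2 hS
  simpa [hD, Finset.sum_apply, Pi.single_apply, ha] using congrFun hMD a

lemma mem_ball_comm {V : Type*} (G : SimpleGraph V) {x z : V} :
    z ∈ _root_.ball G x ↔ x ∈ _root_.ball G z := by
  simp only [_root_.ball, Set.mem_ofPred_eq, eq_comm, G.adj_comm]

lemma symmDiff_ball_eq_singleton_of_not_isIdCode {V : Type*} {G : SimpleGraph V}
    (hTF : TwinFree G) {v w : V} (hvw : G.Adj v w) (h : ¬ IsIdCode G {v}ᶜ) :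
    ∃ x y, x ≠ y ∧ _root_.ball G x ∆ _root_.ball G y = {v} := by
  rw [IsIdCode, not_and_or, IsSeparating] at h
  push Not at h
  rcases h with ⟨x, hx⟩ | ⟨x, y, hxy, hsep⟩
  · have hxv : x = v := by
      by_contra hxv
      exact hx.subset ⟨Or.inl rfl, hxv⟩
    subst hxv
    exact (hx.subset ⟨Or.inr hvw, hvw.ne'⟩).elim
  · refine ⟨x, y, hxy, (Set.Nonempty.subset_singleton_iff ?_).1 ?_⟩
    · rw [Set.nonempty_iff_ne_empty]
      exact fun he => hxy (hTF x y (symmDiff_eq_bot.1 he))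
    · intro z hz
      by_contra hzv
      have := Set.ext_iff.1 hsep z
      simp only [Set.mem_inter_iff, Set.mem_compl_iff] at this
      simp only [Set.mem_symmDiff] at hz
      tauto

lemma adj_of_symmDiff_ball_eq_singleton {V : Type*} {G : SimpleGraph V} {x y v : V}
    (hxy : x ≠ y) (h : _root_.ball G x ∆ _root_.ball G y = {v}) : G.Adj x y := by
  have agree : ∀ z ≠ v, (z ∈ _root_.ball G x ↔ z ∈ _root_.ball G y) := by
    intro z hz
    have : z ∉ _root_.ball G x ∆ _root_.ball G y := by rw [h]; exact hz
    rw [Set.mem_symmDiff] at this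
    by_cases hzx : z ∈ _root_.ball G x <;> simp_all
  by_cases hyv : y = v
  · have hxv : x ≠ v := hyv ▸ hxy
    rcases (agree x hxv).1 (Or.inl rfl) with hxy' | hadj
    · exact absurd hxy' hxy
    · exact hadj.symm
  · rcases (agree y hyv).2 (Or.inl rfl) with hyx | hadj
    · exact absurd hyx.symm hxy
    · exact hadj

section ballMatrix

variable {V : Type*} (G : SimpleGraph V)

noncomputable def ballMatrix : Matrix V V (ZMod 2) :=
  Matrix.of fun x => (_root_.ball G x).indicator 1

lemma indicator_ball_comm (x z : V) :
    (_root_.ball G z).indicator (1 : V → ZMod 2) x = (_root_.ball G x).indicator 1 z := by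
  by_cases h : x ∈ _root_.ball G z
  · rw [Set.indicator_of_mem h, Set.indicator_of_mem ((mem_ball_comm G).1 h)]
    rfl
  · rw [Set.indicator_of_notMem h, Set.indicator_of_notMem (mt (mem_ball_comm G).2 h)]

lemma ballMatrix_isSymm : (ballMatrix G).IsSymm := by
  ext x z
  exact indicator_ball_comm G x z

lemma ballMatrix_mulVec_single [Fintype V] [DecidableEq V] (x : V) :
    ballMatrix G *ᵥ Pi.single x 1 = (_root_.ball G x).indicator 1 := by
  ext z
  rw [mulVec_single_one]
  exact indicator_ball_comm G x z

end ballMatrix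

lemma indicator_one_add_indicator_one_eq_symmDiff {α : Type*} (s t : Set α) :
    s.indicator (1 : α → ZMod 2) + t.indicator 1 = (s ∆ t).indicator 1 := by
  ext z
  by_cases hs : z ∈ s <;> by_cases ht : z ∈ t <;> simp [Set.mem_symmDiff, hs, ht]
  decide

theorem exists_isIdCode_compl_singleton {V : Type*} [Fintype V] {G : SimpleGraph V}
    (hTF : TwinFree G) (hedge : ∃ x y : V, G.Adj x y) : ∃ v, IsIdCode G {v}ᶜ := by
  classical
  by_contra! hcode
  set S := Finset.univ.filter fun v => ∃ w, G.Adj v w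
  have hpair : ∀ v ∈ S, ∃ x y, x ≠ y ∧ _root_.ball G x ∆ _root_.ball G y = {v} := by
    intro v hv
    obtain ⟨w, hvw⟩ := (Finset.mem_filter.1 hv).2
    exact symmDiff_ball_eq_singleton_of_not_isIdCode hTF hvw (hcode v)
  choose! x y hxy hxyv using hpair
  have hadj : ∀ v ∈ S, G.Adj (x v) (y v) := fun v hv =>
    adj_of_symmDiff_ball_eq_singleton (hxy v hv) (hxyv v hv)
  have hxS : ∀ v ∈ S, x v ∈ S := fun v hv => Finset.mem_filter.2 ⟨Finset.mem_univ _, _, hadj v hv⟩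
  have hyS : ∀ v ∈ S, y v ∈ S := fun v hv =>
    Finset.mem_filter.2 ⟨Finset.mem_univ _, _, (hadj v hv).symm⟩
  obtain ⟨a, b, hab⟩ := hedge
  have haS : a ∈ S := Finset.mem_filter.2 ⟨Finset.mem_univ _, b, hab⟩
  refine Finset.ne_empty_of_mem haS ((ballMatrix_isSymm G).eq_empty_of_mulVec_eq_single
    (d := fun v => Pi.single (x v) 1 + Pi.single (y v) 1) ?_ ?_ ?_)
  · intro v hv
    rw [mulVec_add, ballMatrix_mulVec_single, ballMatrix_mulVec_single,
      indicator_one_add_indicator_one_eq_symmDiff, hxyv v hv, Set.indicator_singleton]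
    rfl
  · intro v hv w hw
    have hxw : w ≠ x v := fun h => hw (h ▸ hxS v hv)
    have hyw : w ≠ y v := fun h => hw (h ▸ hyS v hv)
    simp [hxw, hyw]
  · intro v hv
    simp only [Pi.add_apply, Finset.sum_add_distrib, Finset.sum_pi_single', if_pos (hxS v hv),
      if_pos (hyS v hv)]
    decide

theorem stmt0 {V : Type*} [Fintype V] (G : SimpleGraph V) (hTF : TwinFree G)
    (hedge : ∃ x y : V, G.Adj x y) :
    ∃ C : Set V, IsIdCode G C ∧ C.ncard ≤ Fintype.card V - 1 := by
  obtain ⟨v, hv⟩ := exists_isIdCode_compl_singleton hTF hedge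
  refine ⟨{v}ᶜ, hv, ?_⟩
  rw [Set.ncard_compl, Set.ncard_singleton, Nat.card_eq_fintype_card]
end

section
/- Let G be a connected twin-free graph and I a 4-independent set of vertices such that for every x ∈ I, the set V(G)∖{x} is an identifying code of G. Then V(G)∖I is an identifying code of G. -/
open SimpleGraph

/-!
Suppose `x ≠ y` are not separated by `Iᶜ`. Then the symmetric difference `D` of their closed
neighbourhoods lies in `I`; it is nonempty since `G` is twin-free, and for `z ∈ D` it is not
contained in `{z}`, since `{z}ᶜ` separates `x` and `y`. So `D` holds two distinct vertices of `I`.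
They are at distance at most `3`, contradicting 4-independence: `x` and `y` share a neighbour
outside `I`, and if say `z ∈ B₁(x)` then either `x ∉ I`, so `x ∈ B₁(y)`, or `x ∈ I`, so `z = x`.
Domination by `Iᶜ` is easier: a vertex of `I` has a neighbour, which cannot lie in `I`.
-/

open scoped symmDiff

theorem Set.inter_eq_inter_iff_symmDiff_subset_compl {α : Type*} {s t C : Set α} :
    s ∩ C = t ∩ C ↔ s ∆ t ⊆ Cᶜ := by
  constructor
  · rintro h a ha haC
    rcases Set.mem_symmDiff.1 ha with ⟨has, hat⟩ | ⟨hat, has⟩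
    · exact hat (h ▸ ⟨has, haC⟩ : a ∈ t ∩ C).1
    · exact has (h ▸ ⟨hat, haC⟩ : a ∈ s ∩ C).1
  · intro h
    ext a
    by_cases haC : a ∈ C
    · have : ¬(a ∈ s ∧ a ∉ t ∨ a ∈ t ∧ a ∉ s) := fun ha => h (Set.mem_symmDiff.2 ha) haC
      simp only [Set.mem_inter_iff, haC, and_true]
      tauto
    · simp [haC]

theorem Set.exists_mem_symmDiff_ne_of_inter_compl_singleton_ne {α : Type*} {s t : Set α}
    {z : α} (h : s ∩ {z}ᶜ ≠ t ∩ {z}ᶜ) : ∃ w ∈ s ∆ t, w ≠ z := by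
  simpa [Set.not_subset] using mt Set.inter_eq_inter_iff_symmDiff_subset_compl.2 h

section

variable {V : Type*} {G : SimpleGraph V}

theorem mem_ball_symm {a b : V} : a ∈ _root_.ball G b ↔ b ∈ _root_.ball G a := by
  simp only [_root_.ball, Set.mem_ofPred_eq, eq_comm, adj_comm]

theorem dist_le_one_of_mem_ball {a b : V} (h : a ∈ _root_.ball G b) : G.dist a b ≤ 1 := by
  rcases h with rfl | hadj
  · simp
  · exact (dist_eq_one_iff_adj.2 hadj.symm).le

theorem SimpleGraph.Connected.dist_le_two_of_mem_ball (hconn : G.Connected) {a b x : V}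
    (ha : a ∈ _root_.ball G x) (hb : b ∈ _root_.ball G x) : G.dist a b ≤ 2 :=
  calc G.dist a b ≤ G.dist a x + G.dist x b := hconn.dist_triangle
    _ ≤ 1 + 1 :=
      add_le_add (dist_le_one_of_mem_ball ha) (dist_le_one_of_mem_ball (mem_ball_symm.1 hb))

theorem IsIdCode.exists_adj_of_compl_singleton {x : V} (h : IsIdCode G {x}ᶜ) :
    ∃ y, G.Adj x y := by
  obtain ⟨y, hy | hadj, hyx⟩ := h.1 x
  · exact absurd hy hyx
  · exact ⟨y, hadj⟩

variable {I : Set V}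

theorem eq_of_dist_le_three (hind : ∀ x ∈ I, ∀ y ∈ I, x ≠ y → 4 ≤ G.dist x y) {x y : V}
    (hx : x ∈ I) (hy : y ∈ I) (h : G.dist x y ≤ 3) : x = y := by
  by_contra hne
  have := hind x hx y hy hne
  omega

theorem ball_inter_compl_nonempty (hind : ∀ x ∈ I, ∀ y ∈ I, x ≠ y → 4 ≤ G.dist x y)
    (hnbr : ∀ x ∈ I, ∃ y, G.Adj x y) (x : V) : (_root_.ball G x ∩ Iᶜ).Nonempty := by
  by_cases hx : x ∈ I
  · obtain ⟨y, hadj⟩ := hnbr x hx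
    refine ⟨y, Or.inr hadj, fun hy => hadj.ne ?_⟩
    exact eq_of_dist_le_three hind hx hy ((dist_eq_one_iff_adj.2 hadj).le.trans (by norm_num))
  · exact ⟨x, Or.inl rfl, hx⟩

theorem SimpleGraph.Connected.dist_le_three_of_ball_inter_compl_eq (hconn : G.Connected)
    (hind : ∀ x ∈ I, ∀ y ∈ I, x ≠ y → 4 ≤ G.dist x y) {x y z w : V}
    (heq : _root_.ball G x ∩ Iᶜ = _root_.ball G y ∩ Iᶜ) (hne : (_root_.ball G x ∩ Iᶜ).Nonempty)
    (hz : z ∈ _root_.ball G x) (hzI : z ∈ I) (hw : w ∈ _root_.ball G x ∪ _root_.ball G y) :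
    G.dist z w ≤ 3 := by
  rcases hw with hwx | hwy
  · exact (hconn.dist_le_two_of_mem_ball hz hwx).trans (by norm_num)
  obtain ⟨u, hux, huI⟩ := hne
  have huy : u ∈ _root_.ball G y := (heq ▸ ⟨hux, huI⟩ : u ∈ _root_.ball G y ∩ Iᶜ).1
  by_cases hxI : x ∈ I
  · obtain rfl : z = x :=
      eq_of_dist_le_three hind hzI hxI ((dist_le_one_of_mem_ball hz).trans (by norm_num))
    calc G.dist z w ≤ G.dist z y + G.dist y w := hconn.dist_triangle
      _ ≤ 2 + 1 := add_le_add
          (hconn.dist_le_two_of_mem_ball (mem_ball_symm.1 hux) (mem_ball_symm.1 huy))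
          (dist_le_one_of_mem_ball (mem_ball_symm.1 hwy))
  · have hxy : x ∈ _root_.ball G y := (heq ▸ ⟨Or.inl rfl, hxI⟩ : x ∈ _root_.ball G y ∩ Iᶜ).1
    calc G.dist z w ≤ G.dist z x + G.dist x w := hconn.dist_triangle
      _ ≤ 1 + 2 :=
        add_le_add (dist_le_one_of_mem_ball hz) (hconn.dist_le_two_of_mem_ball hxy hwy)

theorem isSeparating_compl (hconn : G.Connected) (hTF : TwinFree G)
    (hind : ∀ x ∈ I, ∀ y ∈ I, x ≠ y → 4 ≤ G.dist x y) (hnbr : ∀ x ∈ I, ∃ y, G.Adj x y)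
    (hsep : ∀ z ∈ I, IsSeparating G {z}ᶜ) : IsSeparating G Iᶜ := by
  intro x y hxy heq
  have hD : _root_.ball G x ∆ _root_.ball G y ⊆ I := by
    simpa using Set.inter_eq_inter_iff_symmDiff_subset_compl.1 heq
  obtain ⟨z, hz⟩ := Set.symmDiff_nonempty.2 fun h => hxy (hTF x y h)
  obtain ⟨w, hw, hwz⟩ :=
    Set.exists_mem_symmDiff_ne_of_inter_compl_singleton_ne (hsep z (hD hz) x y hxy)
  have hwxy := Set.symmDiff_subset_union hw
  have hzw : G.dist z w ≤ 3 := by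
    rcases Set.symmDiff_subset_union hz with hzx | hzy
    · exact hconn.dist_le_three_of_ball_inter_compl_eq hind heq
        (ball_inter_compl_nonempty hind hnbr x) hzx (hD hz) hwxy
    · exact hconn.dist_le_three_of_ball_inter_compl_eq hind heq.symm
        (ball_inter_compl_nonempty hind hnbr y) hzy (hD hz) (Set.union_comm _ _ ▸ hwxy)
  exact hwz (eq_of_dist_le_three hind (hD hw) (hD hz) (by rwa [dist_comm]))

end

theorem stmt4 {V : Type*} (G : SimpleGraph V) (hconn : G.Connected) (hTF : TwinFree G)
    (I : Set V) (hind : ∀ x ∈ I, ∀ y ∈ I, x ≠ y → 4 ≤ G.dist x y)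
    (hcode : ∀ x ∈ I, IsIdCode G ({x}ᶜ : Set V)) :
    IsIdCode G (Iᶜ : Set V) := by
  have hnbr : ∀ x ∈ I, ∃ y, G.Adj x y := fun x hx => (hcode x hx).exists_adj_of_compl_singleton
  exact ⟨ball_inter_compl_nonempty hind hnbr,
    isSeparating_compl hconn hTF hind hnbr fun z hz => (hcode z hz).2⟩
end

section
/- For every k ≥ 1, the graph A_k is twin-free, and every separating set of A_k has size at least 2k−1; moreover the only separating sets of size exactly 2k−1 are B_1(x_k) and B_1(x_{k+1}). -/
open SimpleGraph

/-- The graph `A_k` on vertices `x_1,…,x_{2k}` (indexed `0,…,2k-1`):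
`x_i` adjacent to `x_j` iff `i ≠ j` and `|i - j| ≤ k - 1`. -/
def Agraph (k : ℕ) : SimpleGraph (Fin (2 * k)) where
  Adj i j := i ≠ j ∧ ((i : ℤ) - (j : ℤ)).natAbs ≤ k - 1
  symm := by
    constructor
    intro i j h
    refine ⟨h.1.symm, ?_⟩
    have : ((j : ℤ) - (i : ℤ)).natAbs = ((i : ℤ) - (j : ℤ)).natAbs := by
      rw [← Int.natAbs_neg]; ring_nf
    omega
  loopless := by constructor; intro i h; exact h.1 rfl

/-- The join of two graphs. -/
def joinG {α β : Type*} (G₁ : SimpleGraph α) (G₂ : SimpleGraph β) : SimpleGraph (α ⊕ β) where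
  Adj x y := match x, y with
    | Sum.inl a, Sum.inl b => G₁.Adj a b
    | Sum.inr a, Sum.inr b => G₂.Adj a b
    | _, _ => True
  symm := by constructor; rintro (a | a) (b | b) h <;> first | exact h.symm | trivial
  loopless := by
    constructor
    rintro (a | a) h
    · exact G₁.loopless.irrefl _ h
    · exact G₂.loopless.irrefl _ h

/-- The star `K_{1,t}`: vertex `0` is the center, adjacent to all other vertices. -/
def starGraph (t : ℕ) : SimpleGraph (Fin (t + 1)) where
  Adj i j := i ≠ j ∧ (i = 0 ∨ j = 0)
  symm := by constructor; rintro i j ⟨h1, h2⟩; exact ⟨h1.symm, h2.symm⟩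
  loopless := by constructor; rintro i ⟨h1, _⟩; exact h1 rfl
/-!
Closed balls in `A_k` are the intervals `[i - (k - 1), i + (k - 1)]` cut down to `[0, 2k - 1]`.
For consecutive vertices `i, i + 1` they differ exactly in `i - (k - 1)` and `i + k`, and a
separating set must meet this symmetric difference. Choosing the pair so that one of the two
points falls outside `[0, 2k - 1]` forces every inner vertex `1, …, 2k - 2` into the set, and the
central pair `k - 1, k` forces one of the ends `0, 2k - 1`. Hence a separating set contains
`B_1(x_k) = {x_{2k}}ᶜ` or `B_1(x_{k+1}) = {x_1}ᶜ`, both of size `2k - 1`.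
-/

open scoped symmDiff

lemma IsSeparating.exists_mem_symmDiff {V : Type*} {G : SimpleGraph V} {S : Set V}
    (hS : IsSeparating G S) {x y : V} (hxy : x ≠ y) :
    ∃ z ∈ S, z ∈ _root_.ball G x ∆ _root_.ball G y := by
  by_contra! h
  refine hS x y hxy (Set.ext fun z => ?_)
  by_cases hz : z ∈ S
  · have := h z hz
    simp only [Set.mem_symmDiff] at this
    simp only [Set.mem_inter_iff, hz, and_true]
    by_cases hx : z ∈ _root_.ball G x <;> simp_all
  · simp [hz]

namespace Agraph

variable {k : ℕ}

lemma mem_ball {x y : Fin (2 * k)} :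
    y ∈ _root_.ball (Agraph k) x ↔ (y : ℕ) ≤ x + (k - 1) ∧ (x : ℕ) ≤ y + (k - 1) := by
  simp only [_root_.ball, Agraph, Set.mem_ofPred_eq, ne_eq, Fin.ext_iff]
  omega

lemma ball_ne_of_lt {x y : Fin (2 * k)} (hxy : x < y) :
    _root_.ball (Agraph k) x ≠ _root_.ball (Agraph k) y := by
  rw [Fin.lt_def] at hxy
  have hy := y.isLt
  intro h
  by_cases hky : k ≤ y
  · have hw : (⟨y - k, by omega⟩ : Fin (2 * k)) ∈ _root_.ball (Agraph k) x :=
      mem_ball.2 (by simp only; omega)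
    rw [h, mem_ball, Fin.val_mk] at hw
    omega
  · have hw : (⟨x + k, by omega⟩ : Fin (2 * k)) ∈ _root_.ball (Agraph k) y :=
      mem_ball.2 (by simp only; omega)
    rw [← h, mem_ball, Fin.val_mk] at hw
    omega

lemma twinFree : TwinFree (Agraph k) := by
  intro x y h
  rcases lt_trichotomy x y with hlt | heq | hgt
  · exact absurd h (ball_ne_of_lt hlt)
  · exact heq
  · exact absurd h.symm (ball_ne_of_lt hgt)

lemma mem_symmDiff_ball_of_succ {x y z : Fin (2 * k)} (hxy : (y : ℕ) = x + 1) :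
    z ∈ _root_.ball (Agraph k) x ∆ _root_.ball (Agraph k) y ↔
      (z : ℕ) + k = y ∨ (z : ℕ) = x + k := by
  have hz := z.isLt
  simp only [Set.mem_symmDiff, mem_ball]
  omega

variable {S : Set (Fin (2 * k))}

lemma mem_of_isSeparating (hS : IsSeparating (Agraph k) S) {j : Fin (2 * k)}
    (hj₀ : 1 ≤ (j : ℕ)) (hj₁ : (j : ℕ) + 2 ≤ 2 * k) : j ∈ S := by
  -- the pair `x, x + 1` is chosen so that the second point of its symmetric difference lies
  -- outside `[0, 2k - 1]`
  obtain ⟨x, y, hxy, hsucc, hj⟩ : ∃ x y : Fin (2 * k), x ≠ y ∧ (y : ℕ) = x + 1 ∧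
      ∀ z : Fin (2 * k), (z : ℕ) + k = y ∨ (z : ℕ) = x + k → z = j := by
    by_cases hjk : (j : ℕ) < k
    · refine ⟨⟨j + k - 1, by omega⟩, ⟨j + k, by omega⟩, ?_, ?_, fun z hz => ?_⟩ <;>
        simp only [ne_eq, Fin.ext_iff] at * <;> omega
    · refine ⟨⟨j - k, by omega⟩, ⟨j - k + 1, by omega⟩, ?_, ?_, fun z hz => ?_⟩ <;>
        simp only [ne_eq, Fin.ext_iff] at * <;> omega
  obtain ⟨z, hzS, hz⟩ := hS.exists_mem_symmDiff hxy
  rwa [← hj z ((mem_symmDiff_ball_of_succ hsucc).1 hz)]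

lemma ball_center_eq (hk : 0 < k) :
    _root_.ball (Agraph k) ⟨k - 1, by omega⟩ = {⟨2 * k - 1, by omega⟩}ᶜ := by
  ext w
  have hw := w.isLt
  simp only [mem_ball, Set.mem_compl_iff, Set.mem_singleton_iff, Fin.ext_iff]
  omega

lemma ball_center_succ_eq (hk : 0 < k) :
    _root_.ball (Agraph k) ⟨k, by omega⟩ = {⟨0, by omega⟩}ᶜ := by
  ext w
  have hw := w.isLt
  simp only [mem_ball, Set.mem_compl_iff, Set.mem_singleton_iff, Fin.ext_iff]
  omega

lemma ncard_ball_center (hk : 0 < k) :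
    (_root_.ball (Agraph k) ⟨k - 1, by omega⟩).ncard = 2 * k - 1 := by
  rw [ball_center_eq hk, Set.ncard_compl, Set.ncard_singleton, Nat.card_eq_fintype_card,
    Fintype.card_fin]

lemma ncard_ball_center_succ (hk : 0 < k) :
    (_root_.ball (Agraph k) ⟨k, by omega⟩).ncard = 2 * k - 1 := by
  rw [ball_center_succ_eq hk, Set.ncard_compl, Set.ncard_singleton, Nat.card_eq_fintype_card,
    Fintype.card_fin]

lemma ball_subset_of_isSeparating (hk : 0 < k) (hS : IsSeparating (Agraph k) S) :
    _root_.ball (Agraph k) ⟨k - 1, by omega⟩ ⊆ S ∨ _root_.ball (Agraph k) ⟨k, by omega⟩ ⊆ S := by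
  obtain ⟨z, hzS, hz⟩ :=
    hS.exists_mem_symmDiff (x := ⟨k - 1, by omega⟩) (y := ⟨k, by omega⟩)
      (by simp [Fin.ext_iff]; omega)
  rw [mem_symmDiff_ball_of_succ (by simp only; omega)] at hz
  dsimp only at hz
  have hinner : ∀ w : Fin (2 * k), (w : ℕ) ≠ 0 → (w : ℕ) ≠ 2 * k - 1 → w ∈ S := fun w h₀ h₁ =>
    mem_of_isSeparating hS (by omega) (by have := w.isLt; omega)
  have hz' := z.isLt
  rw [ball_center_eq hk, ball_center_succ_eq hk]
  refine hz.imp (fun hz w hw => ?_) (fun hz w hw => ?_)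
  all_goals
    simp only [Set.mem_compl_iff, Set.mem_singleton_iff, Fin.ext_iff] at hw
    by_cases hwz : (w : ℕ) = z
    · rwa [Fin.ext hwz]
    · exact hinner w (by omega) (by omega)

end Agraph

theorem stmt6 (k : ℕ) (hk : 1 ≤ k) :
    TwinFree (Agraph k) ∧
    (∀ S : Set (Fin (2 * k)), IsSeparating (Agraph k) S → 2 * k - 1 ≤ S.ncard) ∧
    (∀ S : Set (Fin (2 * k)), IsSeparating (Agraph k) S → S.ncard = 2 * k - 1 →
      S = _root_.ball (Agraph k) ⟨k - 1, by omega⟩ ∨ S = _root_.ball (Agraph k) ⟨k, by omega⟩) := by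
  refine ⟨Agraph.twinFree, fun S hS => ?_, fun S hS hS_card => ?_⟩
  · rcases Agraph.ball_subset_of_isSeparating hk hS with h | h
    · exact Agraph.ncard_ball_center hk ▸ Set.ncard_le_ncard h
    · exact Agraph.ncard_ball_center_succ hk ▸ Set.ncard_le_ncard h
  · refine (Agraph.ball_subset_of_isSeparating hk hS).imp (fun h => ?_) (fun h => ?_)
    · exact (Set.eq_of_subset_of_ncard_le h (hS_card ▸ (Agraph.ncard_ball_center hk).ge)).symm
    · exact (Set.eq_of_subset_of_ncard_le h (hS_card ▸ (Agraph.ncard_ball_center_succ hk).ge)).symm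
end

section
/- Let G be a connected twin-free graph on n ≥ 3 vertices with maximum degree Δ ≤ n−3. Then γ^ID(G) ≤ n−2. -/
open SimpleGraph

/-!
Take a minimum identifying code `C` and suppose `|C| ≥ n - 1`. Add a node `∅` with empty
neighbourhood. By minimality every `c ∈ C` is the only element of `C` separating some pair of
nodes; join that pair by an edge labelled `c`. Along a path avoiding the edge `c` the membership
of `c` in the neighbourhood never changes, so every edge is a bridge: the edges form a forest on
`n + 1` nodes, which has at most two components, and the neighbourhood of each `c` is a union of
components of the forest minus the edge `c`. Following the edges at `∅` (there are none, or one
goes to the vertex `z ∉ C`, or one goes to a pendant vertex at `z`) then yields a vertex that is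
isolated or adjacent to all but at most one other vertex.
-/

namespace IdCode

section LabelledEdges

variable {ι W : Type*} (ed : ι → W × W)

def Joins (c : ι) (a b : W) : Prop := ed c = (a, b) ∨ ed c = (b, a)

def Reach (T : Set ι) : W → W → Prop :=
  Relation.ReflTransGen fun a b => ∃ c ∈ T, Joins ed c a b

def IsForest (T : Set ι) : Prop := ∀ c ∈ T, ¬ Reach ed (T \ {c}) (ed c).1 (ed c).2

variable {ed} {T T' : Set ι} {c : ι} {a b x y : W}

lemma Joins.symm (h : Joins ed c a b) : Joins ed c b a := Or.symm h

lemma joins_self (c : ι) : Joins ed c (ed c).1 (ed c).2 := Or.inl rfl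

lemma Joins.eq_or_eq {a' b' : W} (h : Joins ed c a b) (h' : Joins ed c a' b') :
    (a = a' ∧ b = b') ∨ (a = b' ∧ b = a') := by
  unfold Joins at h h'
  rcases h with h | h <;> rcases h' with h' | h' <;> rw [h] at h' <;>
    simp only [Prod.mk.injEq] at h' <;> tauto

lemma Reach.refl (T : Set ι) (a : W) : Reach ed T a a := Relation.ReflTransGen.refl

lemma Reach.trans (h : Reach ed T a b) (h' : Reach ed T b x) : Reach ed T a x :=
  Relation.ReflTransGen.trans h h'

lemma Reach.symm (h : Reach ed T a b) : Reach ed T b a := by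
  induction h with
  | refl => exact Reach.refl _ _
  | tail _ hs ih =>
    obtain ⟨c, hc, hj⟩ := hs
    exact Relation.ReflTransGen.head ⟨c, hc, hj.symm⟩ ih

lemma Reach.mono (hT : T ⊆ T') (h : Reach ed T a b) : Reach ed T' a b :=
  Relation.ReflTransGen.mono (fun _ _ ⟨c, hc, hj⟩ => ⟨c, hT hc, hj⟩) _ _ h

lemma Joins.reach (hc : c ∈ T) (h : Joins ed c a b) : Reach ed T a b :=
  Relation.ReflTransGen.single ⟨c, hc, h⟩

lemma Reach.mem_of_mem {U : Set W} (hU : ∀ c ∈ T, ∀ a b, Joins ed c a b → a ∈ U → b ∈ U)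
    (h : Reach ed T a b) : a ∈ U → b ∈ U := by
  induction h with
  | refl => exact id
  | tail _ hs ih => obtain ⟨c, hc, hj⟩ := hs; exact hU c hc _ _ hj ∘ ih

lemma Reach.diff_or (hj : Joins ed c x y) (h : Reach ed T a b) :
    Reach ed (T \ {c}) a b ∨ (Reach ed (T \ {c}) a x ∧ Reach ed (T \ {c}) y b) ∨
      (Reach ed (T \ {c}) a y ∧ Reach ed (T \ {c}) x b) := by
  induction h with
  | refl => exact Or.inl (Reach.refl _ _)
  | @tail b b' _ hs ih =>
    obtain ⟨d, hd, hj'⟩ := hs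
    by_cases hdc : d = c
    · subst hdc
      rcases hj'.eq_or_eq hj with ⟨rfl, rfl⟩ | ⟨rfl, rfl⟩ <;>
        rcases ih with ih | ⟨ih₁, ih₂⟩ | ⟨ih₁, ih₂⟩ <;>
        simp [Reach.refl, *]
    · have hstep : Reach ed (T \ {c}) b b' := hj'.reach ⟨hd, hdc⟩
      rcases ih with ih | ⟨ih₁, ih₂⟩ | ⟨ih₁, ih₂⟩
      · exact Or.inl (ih.trans hstep)
      · exact Or.inr (Or.inl ⟨ih₁, ih₂.trans hstep⟩)
      · exact Or.inr (Or.inr ⟨ih₁, ih₂.trans hstep⟩)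

lemma Reach.diff_of_not_reach (hc : c ∈ T) (hj : Joins ed c x y) (h : Reach ed T a b)
    (hx : ¬ Reach ed T a x) : Reach ed (T \ {c}) a b := by
  rcases h.diff_or hj with h | ⟨h, -⟩ | ⟨h, -⟩
  · exact h
  · exact absurd (h.mono Set.sdiff_subset) hx
  · exact absurd ((h.mono Set.sdiff_subset).trans (hj.symm.reach hc)) hx

lemma IsForest.not_reach (hF : IsForest ed T) (hc : c ∈ T) (hj : Joins ed c a b) :
    ¬ Reach ed (T \ {c}) a b := by
  have h := hF c hc
  rcases hj with hj | hj <;> rw [hj] at h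
  · exact h
  · exact fun hr => h hr.symm

lemma IsForest.ne (hF : IsForest ed T) (hc : c ∈ T) (hj : Joins ed c a b) : a ≠ b := by
  rintro rfl
  exact hF.not_reach hc hj (Reach.refl _ _)

lemma IsForest.mono (hF : IsForest ed T) (hT : T' ⊆ T) : IsForest ed T' := fun c hc h =>
  hF c (hT hc) (h.mono (Set.sdiff_subset_sdiff_left hT))

lemma IsForest.ncard_add_ncard_le [Finite W] (hT : T.Finite) (hF : IsForest ed T) {R : Set W}
    (hR : R.Pairwise fun a b => ¬ Reach ed T a b) : T.ncard + R.ncard ≤ Nat.card W := by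
  induction T, hT using Set.Finite.induction_on generalizing R with
  | empty =>
    simpa using Set.ncard_le_card R
  | @insert c T hcT hT ih =>
    have hdiff : insert c T \ {c} = T := by simp [hcT]
    have hbridge := hF.not_reach (Set.mem_insert c T) (joins_self c)
    rw [hdiff] at hbridge
    -- once `c` is removed, one of its ends is out of reach of every point of `R`
    obtain ⟨e, he⟩ : ∃ e, ∀ r ∈ R, ¬ Reach ed T r e := by
      by_contra! h
      obtain ⟨r₁, hr₁, h₁⟩ := h (ed c).1
      obtain ⟨r₂, hr₂, h₂⟩ := h (ed c).2
      have hsub : T ⊆ insert c T := Set.subset_insert c T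
      have h₁₂ : Reach ed (insert c T) r₁ r₂ := (h₁.mono hsub).trans
        (((joins_self c).reach (Set.mem_insert c T)).trans (h₂.mono hsub).symm)
      obtain rfl : r₁ = r₂ := by_contra fun hne => hR hr₁ hr₂ hne h₁₂
      exact hbridge (h₁.symm.trans h₂)
    have heR : e ∉ R := fun h => he e h (Reach.refl _ _)
    have key := ih (hF.mono (Set.subset_insert c T)) (R := insert e R) ?_
    · rw [Set.ncard_insert_of_notMem heR, Set.ncard_insert_of_notMem hcT hT] at *
      omega
    · refine Set.pairwise_insert.mpr ⟨?_, fun r hr _ => ⟨fun h => he r hr h.symm, he r hr⟩⟩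
      exact hR.mono' fun a b h h' => h (h'.mono (Set.subset_insert c T))

lemma IsForest.reach_of_card_lt_add_two [Finite W] (hT : T.Finite) (hF : IsForest ed T)
    (hcard : Nat.card W < T.ncard + 2) (a b : W) : Reach ed T a b := by
  by_contra h
  have hab : a ≠ b := by rintro rfl; exact h (Reach.refl _ _)
  have := hF.ncard_add_ncard_le hT (R := {a, b})
    (Set.pairwise_pair.mpr fun _ => ⟨h, fun h' => h h'.symm⟩)
  rw [Set.ncard_pair hab] at this
  omega

lemma IsForest.reach_of_card_lt_add_three [Finite W] (hT : T.Finite) (hF : IsForest ed T)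
    (hcard : Nat.card W < T.ncard + 3) (hab : ¬ Reach ed T a b) (hax : ¬ Reach ed T a x) :
    Reach ed T b x := by
  by_contra h
  have hb : a ≠ b := by rintro rfl; exact hab (Reach.refl _ _)
  have hx : a ≠ x := by rintro rfl; exact hax (Reach.refl _ _)
  have hbx : b ≠ x := by rintro rfl; exact h (Reach.refl _ _)
  have := hF.ncard_add_ncard_le hT (R := {a, b, x}) <| by
    refine Set.pairwise_insert.mpr ⟨Set.pairwise_pair.mpr fun _ => ⟨h, fun h' => h h'.symm⟩, ?_⟩
    rintro y (rfl | rfl) -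
    · exact ⟨hab, fun h' => hab h'.symm⟩
    · exact ⟨hax, fun h' => hax h'.symm⟩
  rw [Set.ncard_insert_of_notMem (by simp [hb, hx]), Set.ncard_pair hbx] at this
  omega

lemma IsForest.exists_leaf [Finite W] (hF : IsForest ed T) (hc : c ∈ T) :
    ∃ d ∈ T, ∃ e e', Joins ed d e e' ∧ ∀ w, Reach ed (T \ {d}) e w → w = e := by
  let side : ι × W → Set W := fun p => {w | Reach ed (T \ {p.1}) p.2 w}
  obtain ⟨⟨d, e⟩, ⟨hd, e', hj⟩, hmin⟩ := (measure fun p => (side p).ncard).wf.has_min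
    {p | p.1 ∈ T ∧ ∃ e', Joins ed p.1 p.2 e'} ⟨(c, (ed c).1), hc, _, joins_self c⟩
  refine ⟨d, hd, e, e', hj, fun w hw => by_contra fun hne => ?_⟩
  obtain rfl | ⟨a, ⟨d', ⟨hd', hd'd⟩, hj'⟩, -⟩ := hw.cases_head
  · exact hne rfl
  have hea : Reach ed (T \ {d}) e a := hj'.reach ⟨hd', hd'd⟩
  have hae : ¬ Reach ed (T \ {d'}) a e := fun h => hF.not_reach hd' hj' h.symm
  -- the side of `d'` containing `a` lies strictly inside the side of `d` containing `e`
  have hmono : (T \ {d'}) \ {d} ⊆ T \ {d} := fun x hx => ⟨hx.1.1, hx.2⟩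
  have hsub : side (d', a) ⊆ side (d, e) := by
    intro y hy
    rcases (show Reach ed (T \ {d'}) a y from hy).diff_or hj with h | ⟨h, -⟩ | ⟨h, -⟩
    · exact hea.trans (h.mono hmono)
    · exact absurd (h.mono Set.sdiff_subset) hae
    · exact absurd (hea.trans (h.mono hmono)) (hF.not_reach hd hj)
  exact hmin (d', a) ⟨hd', e, hj'.symm⟩
    (Set.ncard_lt_ncard ⟨hsub, fun h => hae (h (Reach.refl _ e))⟩)

end LabelledEdges

section Graph

variable {V : Type*} {G : SimpleGraph V}

lemma mem_ball_self (x : V) : x ∈ _root_.ball G x := Or.inl rfl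

lemma mem_ball_comm {x y : V} : y ∈ _root_.ball G x ↔ x ∈ _root_.ball G y :=
  or_congr eq_comm (G.adj_comm x y)

lemma ball_ne_singleton [Fintype V] (hconn : G.Connected) (hn : 2 ≤ Fintype.card V) (x : V) :
    _root_.ball G x ≠ {x} := by
  intro h
  obtain ⟨y, hy⟩ := Fintype.exists_ne_of_one_lt_card hn x
  obtain ⟨p⟩ := hconn.preconnected x y
  obtain ⟨d, -, hd₁, hd₂⟩ := p.exists_boundary_dart {x} rfl hy
  have : d.snd ∈ _root_.ball G x := Or.inr (hd₁ ▸ d.adj)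
  exact hd₂ (h ▸ this)

lemma exists_ne_notMem_ball [Fintype V] [DecidableRel G.Adj]
    (hdeg : G.maxDegree ≤ Fintype.card V - 3) (hn : 3 ≤ Fintype.card V) (x a : V) :
    ∃ y, y ≠ a ∧ y ∉ _root_.ball G x := by
  classical
  by_contra! h
  have hsub : Finset.univ.erase a ⊆ insert x (G.neighborFinset x) := fun y hy => by
    rcases h y (Finset.ne_of_mem_erase hy) with rfl | hxy
    · exact Finset.mem_insert_self _ _
    · exact Finset.mem_insert_of_mem ((G.mem_neighborFinset x y).2 hxy)
  have := (Finset.card_le_card hsub).trans (Finset.card_insert_le _ _)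
  rw [Finset.card_erase_of_mem (Finset.mem_univ a), Finset.card_univ,
    G.card_neighborFinset_eq_degree] at this
  have := G.degree_le_maxDegree x
  omega

variable (G) in
def nodeBall : Option V → Set V := fun a => a.elim ∅ (_root_.ball G)

@[simp] lemma nodeBall_none : nodeBall G none = ∅ := rfl

@[simp] lemma nodeBall_some (x : V) : nodeBall G (some x) = _root_.ball G x := rfl

lemma isIdCode_iff {C : Set V} :
    IsIdCode G C ↔ ∀ a b : Option V, a ≠ b → nodeBall G a ∩ C ≠ nodeBall G b ∩ C := by
  refine ⟨fun ⟨hdom, hsep⟩ a b hab => ?_, fun h => ⟨fun x => ?_, fun x y hxy => ?_⟩⟩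
  · cases a <;> cases b
    · exact absurd rfl hab
    · simpa using fun h => (hdom _).ne_empty h.symm
    · simpa using (hdom _).ne_empty
    · exact hsep _ _ (by simpa using hab)
  · simpa [Set.nonempty_iff_ne_empty] using h (some x) none (by simp)
  · simpa using h (some x) (some y) (by simpa using hxy)

lemma symmDiff_inter_eq_singleton {A B S : Set V} {c : V} (hc : c ∈ S)
    (h : A ∩ (S \ {c}) = B ∩ (S \ {c})) (hne : A ∩ S ≠ B ∩ S) : symmDiff A B ∩ S = {c} := by
  have hrest : ∀ y ∈ S, y ≠ c → (y ∈ A ↔ y ∈ B) := fun y hy hyc => by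
    simpa [hy, hyc] using Set.ext_iff.1 h y
  have hcAB : ¬ (c ∈ A ↔ c ∈ B) := fun hiff => hne <| Set.ext fun y => by
    by_cases hyc : y = c
    · subst hyc; simp [hiff]
    · simp only [Set.mem_inter_iff]
      constructor <;> rintro ⟨h₁, h₂⟩ <;> exact ⟨by simpa [hrest y h₂ hyc] using h₁, h₂⟩
  ext y
  by_cases hyc : y = c
  · subst hyc; simp [Set.mem_symmDiff, hc]; tauto
  · simp only [Set.mem_inter_iff, Set.mem_symmDiff, Set.mem_singleton_iff, hyc, iff_false]
    rintro ⟨h₁, h₂⟩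
    have := hrest y h₂ hyc
    tauto

/-- `ed c` is a pair of nodes which only `c` tells apart; the node `none` stands for the empty
neighbourhood, so that failures of domination are recorded as well. -/
def IsWitness (G : SimpleGraph V) (C : Set V) (ed : V → Option V × Option V) : Prop :=
  ∀ c ∈ C, symmDiff (nodeBall G (ed c).1) (nodeBall G (ed c).2) ∩ C = {c}

lemma exists_isWitness {C : Set V} (hC : IsIdCode G C)
    (hmin : ∀ c ∈ C, ¬ IsIdCode G (C \ {c})) : ∃ ed, IsWitness G C ed := by
  have : ∀ c ∈ C, ∃ p : Option V × Option V,
      symmDiff (nodeBall G p.1) (nodeBall G p.2) ∩ C = {c} := by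
    intro c hc
    obtain ⟨a, b, hab, h⟩ :
        ∃ a b, a ≠ b ∧ nodeBall G a ∩ (C \ {c}) = nodeBall G b ∩ (C \ {c}) := by
      simpa [isIdCode_iff] using hmin c hc
    exact ⟨(a, b), symmDiff_inter_eq_singleton hc h (isIdCode_iff.1 hC a b hab)⟩
  choose! ed hed using this
  exact ⟨ed, hed⟩

end Graph

section Witness

variable {V : Type*} {G : SimpleGraph V} {C : Set V} {ed : V → Option V × Option V}
  {c d : V} {a b x y : Option V}

lemma IsWitness.inter_eq (hE : IsWitness G C ed) (hc : c ∈ C) (hj : Joins ed c a b) :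
    symmDiff (nodeBall G a) (nodeBall G b) ∩ C = {c} := by
  rcases hj with h | h
  · simpa [h] using hE c hc
  · simpa [h, symmDiff_comm] using hE c hc

lemma IsWitness.mem_iff_of_ne (hE : IsWitness G C ed) (hc : c ∈ C) (hj : Joins ed c a b)
    (hd : d ∈ C) (hdc : d ≠ c) : d ∈ nodeBall G a ↔ d ∈ nodeBall G b := by
  by_contra h
  have : d ∈ symmDiff (nodeBall G a) (nodeBall G b) ∩ C := ⟨by rw [Set.mem_symmDiff]; tauto, hd⟩
  exact hdc (by simpa [hE.inter_eq hc hj] using this)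

lemma IsWitness.not_iff (hE : IsWitness G C ed) (hc : c ∈ C) (hj : Joins ed c a b) :
    ¬ (c ∈ nodeBall G a ↔ c ∈ nodeBall G b) := by
  have : c ∈ symmDiff (nodeBall G a) (nodeBall G b) ∩ C := by rw [hE.inter_eq hc hj]; rfl
  rw [Set.mem_inter_iff, Set.mem_symmDiff] at this
  tauto

lemma IsWitness.reach_mem_iff (hE : IsWitness G C ed) (hc : c ∈ C)
    (h : Reach ed (C \ {c}) a b) : c ∈ nodeBall G a ↔ c ∈ nodeBall G b := by
  have hU : ∀ d ∈ C \ {c}, ∀ a b, Joins ed d a b →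
      a ∈ {w | c ∈ nodeBall G w} → b ∈ {w | c ∈ nodeBall G w} := fun d ⟨hd, hdc⟩ a b hj =>
    (hE.mem_iff_of_ne hd hj hc fun h => hdc h.symm).1
  exact ⟨h.mem_of_mem hU, h.symm.mem_of_mem hU⟩

lemma IsWitness.isForest (hE : IsWitness G C ed) : IsForest ed C := fun c hc h =>
  hE.not_iff hc (joins_self c) (hE.reach_mem_iff hc h)

lemma IsWitness.mem_iff_of_not_reach (hE : IsWitness G C ed) (hc : c ∈ C)
    (hj : Joins ed c x y) (h : Reach ed C a b) (hx : ¬ Reach ed C a x) :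
    c ∈ nodeBall G a ↔ c ∈ nodeBall G b :=
  hE.reach_mem_iff hc (h.diff_of_not_reach hc hj hx)

lemma IsWitness.ball_inter_eq {v : V} (hE : IsWitness G C ed) (hc : c ∈ C)
    (hj : Joins ed c none (some v)) : _root_.ball G v ∩ C = {c} := by
  simpa [← Set.bot_eq_empty, bot_symmDiff] using hE.inter_eq hc hj

lemma IsWitness.mem_ball_of_joins_none {v : V} (hE : IsWitness G C ed) (hc : c ∈ C)
    (hj : Joins ed c none (some v)) : c ∈ _root_.ball G v :=
  ((Set.ext_iff.1 (hE.ball_inter_eq hc hj) c).2 rfl).1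

lemma IsWitness.notMem_ball_of_not_reach {w : V} (hE : IsWitness G C ed) (hd : d ∈ C)
    (hj : Joins ed d x y) (hx : ¬ Reach ed C none x) (hw : Reach ed C none (some w)) :
    d ∉ _root_.ball G w := fun hdw => by
  simpa using (hE.mem_iff_of_not_reach hd hj hw hx).2 hdw

lemma IsWitness.mem_ball_of_mem_ball {w q u : V} (hE : IsWitness G C ed) (hw : w ∈ C)
    (hwP : Reach ed C none (some w)) (hq : ¬ Reach ed C none (some q))
    (hwq : q ∈ _root_.ball G w) (hqu : Reach ed C (some q) (some u)) : w ∈ _root_.ball G u := by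
  have hwe : Reach ed C none (ed w).1 := by
    by_contra h
    exact hE.notMem_ball_of_not_reach hw (joins_self w) h hwP (mem_ball_self w)
  have := hE.mem_iff_of_not_reach hw (joins_self w) hqu fun h => hq (hwe.trans h.symm)
  exact this.1 (mem_ball_comm.1 hwq)

end Witness

section Complement

variable {V : Type*} {G : SimpleGraph V} {C : Set V} {ed : V → Option V × Option V} {z : V}

lemma IsWitness.eq_or_eq_of_joins_none {c x y : V} (hE : IsWitness G C ed)
    (hz : ∀ x, x ∈ C ↔ x ≠ z) (hc : c ∈ C) (hj : Joins ed c none (some x))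
    (hy : y ∈ _root_.ball G x) : y = c ∨ y = z := by
  by_cases hyz : y = z
  · exact Or.inr hyz
  · have : y ∈ _root_.ball G x ∩ C := ⟨hy, (hz y).2 hyz⟩
    rw [hE.ball_inter_eq hc hj] at this
    exact Or.inl this

lemma IsWitness.pendant_of_joins_none {d v : V} (hE : IsWitness G C ed)
    (hz : ∀ x, x ∈ C ↔ x ≠ z) (hns : ∀ x, _root_.ball G x ≠ {x}) (hd : d ∈ C)
    (hj : Joins ed d none (some v)) (hv : v ≠ z) :
    d = v ∧ _root_.ball G v = {v, z} ∧
      ∀ w, Reach ed (C \ {v}) (some v) w → w = some v ∨ w = some z := by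
  obtain rfl : v = d := (hE.eq_or_eq_of_joins_none hz hd hj (mem_ball_self v)).resolve_right hv
  have hsub : _root_.ball G v ⊆ {v, z} := fun y hy => hE.eq_or_eq_of_joins_none hz hd hj hy
  have hzv : z ∈ _root_.ball G v := by
    by_contra hzv
    refine hns v (Set.Subset.antisymm (fun y hy => ?_) (by simp [mem_ball_self]))
    rcases hsub hy with rfl | rfl
    · rfl
    · exact absurd hy hzv
  have hball : _root_.ball G v = {v, z} :=
    Set.Subset.antisymm hsub (by simp [Set.insert_subset_iff, mem_ball_self, hzv])
  refine ⟨rfl, hball, fun w hw => ?_⟩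
  have hmem := (hE.reach_mem_iff hd hw).1 (by simp [mem_ball_self])
  cases w with
  | none => simp at hmem
  | some y =>
    have : y ∈ ({v, z} : Set V) := hball ▸ mem_ball_comm.1 hmem
    simpa using this

/-- No edge other than `c` leaves the empty node, since its far end would be a pendant vertex at
`z`, that is, `c` itself. -/
lemma IsWitness.mem_ball_of_joins_none_z {c y : V} (hE : IsWitness G C ed)
    (hz : ∀ x, x ∈ C ↔ x ≠ z) (hns : ∀ x, _root_.ball G x ≠ {x}) (hc : c ∈ C)
    (hj : Joins ed c none (some z)) (hy : Reach ed C none (some y)) : y ∈ _root_.ball G c := by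
  have hF := hE.isForest
  have hleaf : ∀ w, Reach ed (C \ {c}) none w → w = none := by
    intro w hw
    obtain rfl | ⟨a, ⟨d, ⟨hd, hdc⟩, hjd⟩, -⟩ := hw.cases_head
    · rfl
    exfalso
    cases a with
    | none => exact hF.ne hd hjd rfl
    | some v =>
      by_cases hvz : v = z
      · subst hvz
        exact hF.not_reach hc hj (hjd.reach ⟨hd, hdc⟩)
      · obtain ⟨rfl, hv, -⟩ := hE.pendant_of_joins_none hz hns hd hjd hvz
        have hzd : z ∈ _root_.ball G d := by simp [hv]
        rcases hE.eq_or_eq_of_joins_none hz hc hj (mem_ball_comm.1 hzd) with h | h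
        · exact hdc h
        · exact hvz h
  rcases hy.diff_or hj with h | ⟨-, h⟩ | ⟨h, -⟩
  · exact absurd (hleaf _ h) (by simp)
  · exact mem_ball_comm.1 ((hE.reach_mem_iff hc h).1 (hE.mem_ball_of_joins_none hc hj))
  · exact absurd (hleaf _ h) (by simp)

/-- By connectivity some vertex `w` of the class of the empty node sees a vertex outside it. Then
`w ≠ z`, as `z` only sees `c`, and `w` would see the label of an edge outside the class. -/
lemma IsWitness.not_joins_none_z {c : V} (hE : IsWitness G C ed) (hz : ∀ x, x ∈ C ↔ x ≠ z)
    (hns : ∀ x, _root_.ball G x ≠ {x}) (hsmall : ∀ x a, ∃ y, y ≠ a ∧ y ∉ _root_.ball G x)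
    (htwo : ∀ a b, ¬ Reach ed C none a → ¬ Reach ed C none b → Reach ed C a b)
    (hconn : G.Connected) (hc : c ∈ C) : ¬ Joins ed c none (some z) := by
  intro hj
  set P : Set V := {y | Reach ed C none (some y)}
  have hP : ∀ y ∈ P, y ∈ _root_.ball G c := fun y => hE.mem_ball_of_joins_none_z hz hns hc hj
  have hcP : c ∈ P := by
    by_contra hcP
    obtain ⟨y, -, hy⟩ := hsmall c c
    by_cases hyP : y ∈ P
    · exact hy (hP y hyP)
    · have := hE.mem_iff_of_not_reach hc hj (htwo _ _ hcP hyP) fun h => hcP h.symm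
      exact hy (mem_ball_comm.1 (this.1 (mem_ball_self c)))
  obtain ⟨q₁, -, hq₁⟩ := hsmall c c
  obtain ⟨q₂, hq₂₁, hq₂⟩ := hsmall c q₁
  have hq₁P : q₁ ∉ P := fun h => hq₁ (hP q₁ h)
  have hq₂P : q₂ ∉ P := fun h => hq₂ (hP q₂ h)
  obtain ⟨e, ⟨d, hd, hjd⟩, -⟩ :=
    (htwo _ _ hq₁P hq₂P).cases_head.resolve_left (by simpa using hq₂₁.symm)
  have hdP : ∀ y ∈ P, d ∉ _root_.ball G y := fun y =>
    hE.notMem_ball_of_not_reach hd hjd hq₁P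
  have hdQ : d ∉ P := fun h => hdP d h (mem_ball_self d)
  obtain ⟨p⟩ := hconn.preconnected z q₁
  obtain ⟨⟨⟨w, q⟩, hwq⟩, -, hw, hq⟩ := p.exists_boundary_dart P (hj.reach hc) hq₁P
  change w ∈ P at hw
  change q ∉ P at hq
  change G.Adj w q at hwq
  by_cases hwz : w = z
  · subst hwz
    rcases hE.eq_or_eq_of_joins_none hz hc hj (Or.inr hwq) with h | h
    · exact hq (h ▸ hcP)
    · exact hq (h ▸ hw)
  · exact hdP w hw (mem_ball_comm.1 (hE.mem_ball_of_mem_ball ((hz w).2 hwz) hw hq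
      (Or.inr hwq) (htwo _ _ hq hdQ)))

lemma IsWitness.exists_joins_of_reach_z {v : V} (hE : IsWitness G C ed)
    (hz : ∀ x, x ∈ C ↔ x ≠ z) (hns : ∀ x, _root_.ball G x ≠ {x}) (hvC : v ∈ C)
    (hj : Joins ed v none (some v)) (hv : v ≠ z) (hvz : Reach ed (C \ {v}) (some v) (some z)) :
    ∃ c ∈ C, c ≠ v ∧ Joins ed c (some v) (some z) ∧ c ∈ _root_.ball G z ∧
      ∀ y ∈ _root_.ball G z, y ∈ C → y = v ∨ y = c := by
  have hF := hE.isForest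
  obtain ⟨-, hball, hX⟩ := hE.pendant_of_joins_none hz hns hvC hj hv
  obtain ⟨c, hc, hcv, hj'⟩ : ∃ c ∈ C, c ≠ v ∧ Joins ed c (some v) (some z) := by
    obtain h | ⟨a, ⟨c, ⟨hc, hcv⟩, hj'⟩, -⟩ := hvz.cases_head
    · exact absurd (Option.some_injective _ h) hv
    rcases hX a (hj'.reach ⟨hc, hcv⟩) with rfl | rfl
    · exact absurd rfl (hF.ne hc hj')
    · exact ⟨c, hc, hcv, hj'⟩
  refine ⟨c, hc, hcv, hj', ?_, fun y hy hyC => ?_⟩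
  · have hcv' : c ∉ _root_.ball G v := by
      rw [hball]
      rintro (h | h)
      · exact hcv h
      · exact (hz c).1 hc h
    simpa [hcv'] using hE.not_iff hc hj'
  · by_cases hyc : y = c
    · exact Or.inr hyc
    · have : y ∈ _root_.ball G v := (hE.mem_iff_of_ne hc hj' hyC hyc).2 hy
      rw [hball] at this
      rcases this with rfl | rfl
      · exact Or.inl rfl
      · exact absurd rfl ((hz y).1 hyC)

lemma IsWitness.eq_none_or_eq_of_reach_z {v : V} {w : Option V} (hE : IsWitness G C ed)
    (hz : ∀ x, x ∈ C ↔ x ≠ z) (hns : ∀ x, _root_.ball G x ≠ {x}) (hvC : v ∈ C)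
    (hj : Joins ed v none (some v)) (hv : v ≠ z) (hvz : Reach ed (C \ {v}) (some v) (some z))
    (hw : Reach ed C none w) : w = none ∨ w = some v ∨ w = some z := by
  have hF := hE.isForest
  obtain ⟨-, hball, hX⟩ := hE.pendant_of_joins_none hz hns hvC hj hv
  obtain ⟨c, hc, hcv, hj', hcz, hzC⟩ := hE.exists_joins_of_reach_z hz hns hvC hj hv hvz
  refine hw.mem_of_mem (U := {w | w = none ∨ w = some v ∨ w = some z}) ?_ (Or.inl rfl)
  rintro d hd a b hjd (rfl | rfl | rfl)
  · cases b with
    | none => exact absurd rfl (hF.ne hd hjd)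
    | some y =>
      by_cases hyz : y = z
      · subst hyz
        have h₁ := (hE.eq_or_eq_of_joins_none hz hd hjd hcz).resolve_right ((hz c).1 hc)
        have h₂ := (hE.eq_or_eq_of_joins_none hz hd hjd
          (mem_ball_comm.1 (hball ▸ by simp))).resolve_right hv
        exact absurd (h₁.trans h₂.symm) hcv
      · obtain ⟨rfl, hy, -⟩ := hE.pendant_of_joins_none hz hns hd hjd hyz
        rcases hzC d (mem_ball_comm.1 (hy ▸ by simp)) hd with rfl | rfl
        · exact Or.inr (Or.inl rfl)
        · rcases hjd.eq_or_eq hj' with h | h <;> simp at h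
  · by_cases hdv : d = v
    · subst hdv
      rcases hjd.eq_or_eq hj with h | h
      · simp at h
      · exact Or.inl h.2
    · exact Or.inr (hX b (hjd.reach ⟨hd, hdv⟩))
  · by_cases hdv : d = v
    · subst hdv
      rcases hjd.eq_or_eq hj with h | h <;> simp [hv.symm] at h
    · exact Or.inr (hX b (hvz.trans (hjd.reach ⟨hd, hdv⟩)))

/-- Otherwise the class of the empty node is `{∅, v, z}`, and the vertex `c` joined to `v` and
`z` would see every vertex but `v`. -/
lemma IsWitness.not_reach_z {v : V} (hE : IsWitness G C ed) (hz : ∀ x, x ∈ C ↔ x ≠ z)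
    (hns : ∀ x, _root_.ball G x ≠ {x}) (hsmall : ∀ x a, ∃ y, y ≠ a ∧ y ∉ _root_.ball G x)
    (htwo : ∀ a b, ¬ Reach ed C none a → ¬ Reach ed C none b → Reach ed C a b)
    (hvC : v ∈ C) (hj : Joins ed v none (some v)) (hv : v ≠ z) :
    ¬ Reach ed (C \ {v}) (some v) (some z) := by
  intro hvz
  obtain ⟨c, hc, hcv, hj', hcz, -⟩ := hE.exists_joins_of_reach_z hz hns hvC hj hv hvz
  have hP : ∀ y, Reach ed C none (some y) → y = v ∨ y = z := fun y h => by
    simpa using hE.eq_none_or_eq_of_reach_z hz hns hvC hj hv hvz h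
  have hcP : ¬ Reach ed C none (some c) := fun h => (hP c h).elim hcv ((hz c).1 hc)
  obtain ⟨y, hyv, hy⟩ := hsmall c v
  apply hy
  by_cases hyz : y = z
  · subst hyz
    exact mem_ball_comm.1 hcz
  · have hyP : ¬ Reach ed C none (some y) := fun h => (hP y h).elim hyv hyz
    have := hE.mem_iff_of_not_reach hc hj' (htwo _ _ hcP hyP)
      fun h => hcP ((hj.reach hvC).trans h.symm)
    exact mem_ball_comm.1 (this.1 (mem_ball_self c))

/-- A pendant vertex at `z` has no edge besides the one to the empty node. -/
lemma IsWitness.eq_none_or_joins_none {w : Option V} (hE : IsWitness G C ed)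
    (hz : ∀ x, x ∈ C ↔ x ≠ z) (hns : ∀ x, _root_.ball G x ≠ {x})
    (hzP : ¬ Reach ed C none (some z)) (hw : Reach ed C none w) :
    w = none ∨ ∃ d ∈ C, Joins ed d none w := by
  have hF := hE.isForest
  induction hw with
  | refl => exact Or.inl rfl
  | @tail b w hpre hstep ih =>
    obtain ⟨d, hd, hjd⟩ := hstep
    rcases ih with rfl | ⟨d₀, hd₀, hj₀⟩
    · exact Or.inr ⟨d, hd, hjd⟩
    cases b with
    | none => exact absurd rfl (hF.ne hd₀ hj₀)
    | some u =>
      have huz : u ≠ z := by rintro rfl; exact hzP hpre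
      obtain ⟨rfl, -, hXu⟩ := hE.pendant_of_joins_none hz hns hd₀ hj₀ huz
      by_cases hdu : d = d₀
      · subst hdu
        rcases hjd.eq_or_eq hj₀ with h | h
        · simp at h
        · exact Or.inl h.2
      · rcases hXu _ (hjd.reach ⟨hd, hdu⟩) with rfl | rfl
        · exact Or.inr ⟨d₀, hd₀, hj₀⟩
        · exact absurd (hpre.trans (hjd.reach hd)) hzP

/-- Otherwise `z` is outside the class of the empty node, every other vertex is inside it, and
`z` would see everything. -/
lemma IsWitness.reach_z {v : V} (hE : IsWitness G C ed) (hz : ∀ x, x ∈ C ↔ x ≠ z)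
    (hns : ∀ x, _root_.ball G x ≠ {x}) (hsmall : ∀ x a, ∃ y, y ≠ a ∧ y ∉ _root_.ball G x)
    (htwo : ∀ a b, ¬ Reach ed C none a → ¬ Reach ed C none b → Reach ed C a b)
    (hvC : v ∈ C) (hj : Joins ed v none (some v)) (hv : v ≠ z) :
    Reach ed (C \ {v}) (some v) (some z) := by
  by_contra hvz
  obtain ⟨-, hball, -⟩ := hE.pendant_of_joins_none hz hns hvC hj hv
  have hvzball : v ∈ _root_.ball G z := mem_ball_comm.1 (hball ▸ by simp)
  have hzP : ¬ Reach ed C none (some z) := fun h => by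
    rcases h.diff_or hj with h | ⟨-, h⟩ | ⟨h, -⟩
    · simpa using (hE.reach_mem_iff hvC h).2 hvzball
    · exact hvz h
    · exact hE.isForest.not_reach hvC hj h
  have hP : ∀ y, y ≠ z → Reach ed C none (some y) := fun y hyz => by
    by_contra hyP
    have := hE.mem_iff_of_not_reach hvC hj (htwo _ _ hzP hyP) fun h => hzP h.symm
    have hyv : y ∈ _root_.ball G v := mem_ball_comm.1 (this.1 hvzball)
    rw [hball] at hyv
    rcases hyv with rfl | rfl
    · exact hyP (hj.reach hvC)
    · exact hyz rfl
  obtain ⟨y, hyz, hy⟩ := hsmall z z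
  rcases hE.eq_none_or_joins_none hz hns hzP (hP y hyz) with h | ⟨d, hd, hjd⟩
  · simp at h
  · obtain ⟨-, hy', -⟩ := hE.pendant_of_joins_none hz hns hd hjd hyz
    exact hy (mem_ball_comm.1 (hy' ▸ by simp))

/-- If the empty node were isolated, all vertices would form one tree, and the label `d` of an
edge at a leaf `x` would be adjacent either to `x` alone or to everything but `x`. -/
lemma IsWitness.exists_joins_none [Finite V] (hE : IsWitness G C ed)
    (hns : ∀ x, _root_.ball G x ≠ {x})
    (hsmall : ∀ x a, ∃ y, y ≠ a ∧ y ∉ _root_.ball G x)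
    (htwo : ∀ a b, ¬ Reach ed C none a → ¬ Reach ed C none b → Reach ed C a b)
    (hC : C.Nonempty) : ∃ d ∈ C, ∃ y, Joins ed d none (some y) := by
  by_contra! hnone
  have hF := hE.isForest
  have hreal : ∀ {d a}, d ∈ C → Joins ed d none a → False := fun {d a} hd hjd => by
    cases a with
    | none => exact hF.ne hd hjd rfl
    | some y => exact hnone d hd y hjd
  have hiso : ∀ x : V, ¬ Reach ed C none (some x) := fun x h => by
    obtain h | ⟨a, ⟨d, hd, hjd⟩, -⟩ := h.cases_head
    · simp at h
    · exact hreal hd hjd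
  obtain ⟨d, hd, e, e', hj, hleaf⟩ := hF.exists_leaf hC.some_mem
  obtain ⟨x, rfl⟩ : ∃ x, e = some x := Option.ne_none_iff_exists'.1 fun h => hreal hd (h ▸ hj)
  obtain ⟨x', rfl⟩ : ∃ x', e' = some x' :=
    Option.ne_none_iff_exists'.1 fun h => hreal hd (h ▸ hj.symm)
  have hrest : ∀ y, y ≠ x → (d ∈ _root_.ball G y ↔ d ∈ _root_.ball G x') := fun y hyx => by
    rcases (htwo _ _ (hiso x) (hiso y)).diff_or hj with h | ⟨-, h⟩ | ⟨h, -⟩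
    · exact absurd (Option.some_injective _ (hleaf _ h)) hyx
    · exact (hE.reach_mem_iff hd h).symm
    · exact absurd h (hF.not_reach hd hj)
  have hx := hE.not_iff hd hj
  by_cases hdx' : d ∈ _root_.ball G x'
  · obtain ⟨y, hyx, hy⟩ := hsmall d x
    exact hy (mem_ball_comm.1 ((hrest y hyx).2 hdx'))
  · have hball : _root_.ball G d = {x} := by
      refine Set.eq_singleton_iff_unique_mem.2 ⟨mem_ball_comm.1 (by simp_all), fun y hy => ?_⟩
      by_contra hyx
      exact hdx' ((hrest y hyx).1 (mem_ball_comm.1 hy))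
    obtain rfl : d = x := by simpa [hball] using mem_ball_self (G := G) d
    exact hns d hball

lemma IsWitness.false_of_forall_mem_iff_ne [Finite V] (hE : IsWitness G C ed)
    (hz : ∀ x, x ∈ C ↔ x ≠ z) (hns : ∀ x, _root_.ball G x ≠ {x})
    (hsmall : ∀ x a, ∃ y, y ≠ a ∧ y ∉ _root_.ball G x)
    (htwo : ∀ a b, ¬ Reach ed C none a → ¬ Reach ed C none b → Reach ed C a b)
    (hconn : G.Connected) : False := by
  obtain ⟨y, hyz, -⟩ := hsmall z z
  obtain ⟨d, hd, v, hj⟩ := hE.exists_joins_none hns hsmall htwo ⟨y, (hz y).2 hyz⟩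
  by_cases hvz : v = z
  · subst hvz
    exact hE.not_joins_none_z hz hns hsmall htwo hconn hd hj
  · obtain ⟨rfl, -, -⟩ := hE.pendant_of_joins_none hz hns hd hj hvz
    exact hE.not_reach_z hz hns hsmall htwo hd hj hvz (hE.reach_z hz hns hsmall htwo hd hj hvz)

end Complement

lemma IsWitness.false_of_univ {V : Type*} {G : SimpleGraph V} {ed : V → Option V × Option V}
    {x : V} (hE : IsWitness G Set.univ ed) (hns : ∀ x, _root_.ball G x ≠ {x})
    (hreach : Reach ed Set.univ none (some x)) : False := by
  obtain h | ⟨a, ⟨d, -, hj⟩, -⟩ := hreach.cases_head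
  · simp at h
  cases a with
  | none => exact hE.isForest.ne trivial hj rfl
  | some y =>
    have hball := hE.ball_inter_eq trivial hj
    rw [Set.inter_univ] at hball
    obtain rfl : y = d := by simpa [hball] using mem_ball_self (G := G) y
    exact hns y hball

lemma exists_isIdCode_ncard_eq_gammaID {V : Type*} [Finite V] {G : SimpleGraph V}
    (hTF : TwinFree G) :
    ∃ C, IsIdCode G C ∧ C.ncard = gammaID G ∧ ∀ c ∈ C, ¬ IsIdCode G (C \ {c}) := by
  have huniv : IsIdCode G Set.univ :=
    ⟨fun x => ⟨x, mem_ball_self x, trivial⟩, fun x y hxy h => hxy (hTF x y (by simpa using h))⟩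
  obtain ⟨C, hC, hCcard⟩ : gammaID G ∈ {n | ∃ C : Set V, IsIdCode G C ∧ C.ncard = n} :=
    Nat.sInf_mem ⟨_, Set.univ, huniv, rfl⟩
  refine ⟨C, hC, hCcard, fun c hc hc' => ?_⟩
  have hle : gammaID G ≤ (C \ {c}).ncard := Nat.sInf_le ⟨C \ {c}, hc', rfl⟩
  rw [Set.ncard_sdiff_singleton_of_mem hc] at hle
  have := (Set.ncard_pos (Set.toFinite C)).2 ⟨c, hc⟩
  omega

end IdCode

theorem stmt13 {V : Type*} [Fintype V] (G : SimpleGraph V) [DecidableRel G.Adj]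
    (hn : 3 ≤ Fintype.card V) (hconn : G.Connected) (hTF : TwinFree G)
    (hdeg : G.maxDegree ≤ Fintype.card V - 3) :
    gammaID G ≤ Fintype.card V - 2 := by
  obtain ⟨C, hC, hCcard, hmin⟩ := IdCode.exists_isIdCode_ncard_eq_gammaID hTF
  by_contra! hlt
  obtain ⟨ed, hE⟩ := IdCode.exists_isWitness hC hmin
  have hF := hE.isForest
  have hns := IdCode.ball_ne_singleton hconn (by omega)
  have hsmall := IdCode.exists_ne_notMem_ball hdeg hn
  have hnodes : Nat.card (Option V) = Fintype.card V + 1 := by simp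
  have hcompl : Cᶜ.ncard ≤ 1 := by
    rw [Set.ncard_compl, Nat.card_eq_fintype_card]
    omega
  rcases (Set.ncard_le_one_iff_eq).1 hcompl with h | ⟨z, hz⟩
  · obtain rfl := Set.compl_empty_iff.1 h
    obtain ⟨x⟩ : Nonempty V := Fintype.card_pos_iff.1 (by omega)
    refine hE.false_of_univ hns (hF.reach_of_card_lt_add_two (Set.toFinite _) ?_ none (some x))
    rw [hnodes, Set.ncard_univ, Nat.card_eq_fintype_card]
    omega
  · refine hE.false_of_forall_mem_iff_ne (z := z) (fun x => ?_) hns hsmall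
      (fun a b ha hb => hF.reach_of_card_lt_add_three (Set.toFinite _) (by omega) ha hb) hconn
    rw [← Set.notMem_compl_iff, hz, Set.mem_singleton_iff]
end

section
/- In the infinite graph A_∞, the only separating set is the entire vertex set: for every i, vertices x_i and x_{i+1} are separated only by y_{i+1}, and y_i and y_{i+1} are separated only by x_i; consequently no proper subset of V(A_∞) is a separating set. -/
open SimpleGraph

/-- The infinite graph `A_∞`: `inl i = x_i`, `inr j = y_j`; `X` and `Y` are cliques and
`x_i ~ y_j` iff `i < j`. -/
def Ainf : SimpleGraph (ℤ ⊕ ℤ) where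
  Adj u v := match u, v with
    | Sum.inl i, Sum.inl j => i ≠ j
    | Sum.inr i, Sum.inr j => i ≠ j
    | Sum.inl i, Sum.inr j => i < j
    | Sum.inr j, Sum.inl i => i < j
  symm := by
    refine ⟨?_⟩
    rintro (i | i) (j | j) h
    · exact h.symm
    · exact h
    · exact h
    · exact h.symm
  loopless := by
    refine ⟨?_⟩
    rintro (i | i) h
    · exact h rfl
    · exact h rfl

/-
The closed neighbourhoods of consecutive vertices of `A_∞` are nested and differ in a single
vertex: `B₁(x_i) = B₁(x_{i+1}) ∪ {y_{i+1}}` and `B₁(y_{i+1}) = B₁(y_i) ∪ {x_i}`. Hence a set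
missing `y_{i+1}` (resp. `x_i`) cannot separate that pair, and since every vertex arises as the
extra vertex of such a pair, a separating set must contain all of them.
-/

theorem mem_of_ball_inter_ne {V : Type*} {G : SimpleGraph V} {S : Set V} {u v w : V}
    (hball : _root_.ball G u = insert w (_root_.ball G v))
    (hS : _root_.ball G u ∩ S ≠ _root_.ball G v ∩ S) : w ∈ S := by
  by_contra hw
  exact hS (hball ▸ Set.insert_inter_of_notMem hw)

namespace Ainf

theorem ball_inl_eq_insert (i : ℤ) :
    _root_.ball Ainf (Sum.inl i) = insert (Sum.inr (i + 1)) (_root_.ball Ainf (Sum.inl (i + 1))) := by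
  ext (j | j) <;> simp [_root_.ball, Ainf] <;> omega

theorem ball_inr_succ_eq_insert (i : ℤ) :
    _root_.ball Ainf (Sum.inr (i + 1)) = insert (Sum.inl i) (_root_.ball Ainf (Sum.inr i)) := by
  ext (j | j) <;> simp [_root_.ball, Ainf] <;> omega

end Ainf

theorem stmt15 :
    (∀ i : ℤ, ∀ S : Set (ℤ ⊕ ℤ),
      _root_.ball Ainf (Sum.inl i) ∩ S ≠ _root_.ball Ainf (Sum.inl (i + 1)) ∩ S → Sum.inr (i + 1) ∈ S) ∧
    (∀ i : ℤ, ∀ S : Set (ℤ ⊕ ℤ),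
      _root_.ball Ainf (Sum.inr i) ∩ S ≠ _root_.ball Ainf (Sum.inr (i + 1)) ∩ S → Sum.inl i ∈ S) ∧
    (∀ S : Set (ℤ ⊕ ℤ), IsSeparating Ainf S → S = Set.univ) := by
  have hx : ∀ (i : ℤ) (S : Set (ℤ ⊕ ℤ)),
      _root_.ball Ainf (Sum.inl i) ∩ S ≠ _root_.ball Ainf (Sum.inl (i + 1)) ∩ S →
        Sum.inr (i + 1) ∈ S :=
    fun i _ ↦ mem_of_ball_inter_ne (Ainf.ball_inl_eq_insert i)
  have hy : ∀ (i : ℤ) (S : Set (ℤ ⊕ ℤ)),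
      _root_.ball Ainf (Sum.inr i) ∩ S ≠ _root_.ball Ainf (Sum.inr (i + 1)) ∩ S → Sum.inl i ∈ S :=
    fun i S h ↦ mem_of_ball_inter_ne (Ainf.ball_inr_succ_eq_insert i) h.symm
  refine ⟨hx, hy, fun S hS ↦ Set.eq_univ_of_forall ?_⟩
  rintro (j | j)
  · exact hy j S (hS _ _ (by simp))
  · simpa using hx (j - 1) S (hS _ _ (by simp))
end

section
/- If G is a twin-free graph (finite or infinite) not containing A_∞^+ as an induced subgraph, then for every vertex x of G there exists a vertex y in the closed neighborhood of x such that G−y is twin-free. -/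
open SimpleGraph

/-- The graph `A_∞^+` on positive indices: `inl i = x_{i+1}`, `inr j = y_{j+1}`;
`X` and `Y` are cliques and `x_i ~ y_j` iff `i < j`. -/
def AinfPlus : SimpleGraph (ℕ ⊕ ℕ) where
  Adj u v := match u, v with
    | Sum.inl i, Sum.inl j => i ≠ j
    | Sum.inr i, Sum.inr j => i ≠ j
    | Sum.inl i, Sum.inr j => i < j
    | Sum.inr j, Sum.inl i => i < j
  symm := ⟨by
    rintro (i | i) (j | j) h
    · exact h.symm
    · exact h
    · exact h
    · exact h.symm⟩
  loopless := ⟨by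
    rintro (i | i) h
    · exact h rfl
    · exact h rfl⟩

/-!
If no `G - y` with `y ∈ B[x]` is twin-free, then, `G` being twin-free, every `z ∈ B[x]` is the
sole separator of some pair: `B[u] = B[v] ∪ {z}` with `z ∉ B[v]`. Two such relations sharing a
vertex determine each other, and starting from `x` they propagate indefinitely inside `B[x]`,
producing vertices `Xₙ, Yₙ` with `B[Xₙ] = B[Xₙ₊₁] ∪ {Yₙ₊₁}` and `B[Yₙ₊₁] = B[Yₙ] ∪ {Xₙ}`.
The balls of the `Xₙ` shrink and those of the `Yₙ` grow, which forces `Xᵢ ∈ B[Yⱼ] ↔ i < j`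
while the `Xₙ` and the `Yₙ` each form a clique: an induced copy of `A_∞^+`.
-/

section

variable {V : Type*} {G : SimpleGraph V}

lemma mem_ball_comm_s16 {u w : V} : w ∈ _root_.ball G u ↔ u ∈ _root_.ball G w := by
  change w = u ∨ G.Adj u w ↔ u = w ∨ G.Adj w u
  rw [G.adj_comm, eq_comm]

lemma self_mem_ball (u : V) : u ∈ _root_.ball G u := Or.inl rfl

lemma adj_iff_mem_ball_and_ne {u w : V} : G.Adj u w ↔ w ∈ _root_.ball G u ∧ w ≠ u :=
  ⟨fun h => ⟨Or.inr h, h.ne'⟩, fun ⟨h, hne⟩ => h.resolve_left hne⟩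

def embeddingOfMemBallIff {W : Type*} {H : SimpleGraph W} (hH : TwinFree H) (f : W → V)
    (hf : ∀ p q, f q ∈ _root_.ball G (f p) ↔ q ∈ _root_.ball H p) : H ↪g G :=
  have hinj : f.Injective := fun p q hpq => hH p q <| Set.ext fun r => by rw [← hf, ← hf, hpq]
  ⟨⟨f, hinj⟩, fun {p q} => by
    change G.Adj (f p) (f q) ↔ _
    rw [adj_iff_mem_ball_and_ne, adj_iff_mem_ball_and_ne, hf, hinj.ne_iff]⟩

section AinfPlus

variable {i j : ℕ}

@[simp] lemma inl_mem_ball_inl : Sum.inl j ∈ _root_.ball AinfPlus (Sum.inl i) := by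
  simp only [_root_.ball, AinfPlus, Set.mem_ofPred_eq, Sum.inl.injEq]
  omega

@[simp] lemma inr_mem_ball_inr : Sum.inr j ∈ _root_.ball AinfPlus (Sum.inr i) := by
  simp only [_root_.ball, AinfPlus, Set.mem_ofPred_eq, Sum.inr.injEq]
  omega

@[simp] lemma inr_mem_ball_inl : Sum.inr j ∈ _root_.ball AinfPlus (Sum.inl i) ↔ i < j := by
  simp [_root_.ball, AinfPlus]

@[simp] lemma inl_mem_ball_inr : Sum.inl i ∈ _root_.ball AinfPlus (Sum.inr j) ↔ i < j := by
  simp [_root_.ball, AinfPlus]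

end AinfPlus

lemma twinFree_ainfPlus : TwinFree AinfPlus := by
  intro p q h
  rcases p with i | i <;> rcases q with j | j <;>
  · have h₁ := Set.ext_iff.mp h (.inl i)
    have h₂ := Set.ext_iff.mp h (.inl j)
    have h₃ := Set.ext_iff.mp h (.inr i)
    have h₄ := Set.ext_iff.mp h (.inr j)
    simp at h₁ h₂ h₃ h₄ ⊢ <;> omega

lemma ball_induce (s : Set V) (a : s) :
    _root_.ball (G.induce s) a = Subtype.val ⁻¹' _root_.ball G a := by
  ext w
  simp [_root_.ball, Subtype.ext_iff]

def IsSoleSeparator (G : SimpleGraph V) (z u v : V) : Prop :=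
  z ∉ _root_.ball G v ∧ _root_.ball G u = insert z (_root_.ball G v)

namespace IsSoleSeparator

variable {z u v : V}

lemma mem_ball (h : IsSoleSeparator G z u v) : z ∈ _root_.ball G u := h.2 ▸ Set.mem_insert _ _

lemma ball_subset (h : IsSoleSeparator G z u v) : _root_.ball G v ⊆ _root_.ball G u :=
  h.2 ▸ Set.subset_insert _ _

lemma ne (h : IsSoleSeparator G z u v) : u ≠ v := fun e => h.1 (e ▸ h.mem_ball)

variable {α β γ : V}

lemma left_eq (h₁ : IsSoleSeparator G γ β α) (h₂ : IsSoleSeparator G β u v) : u = γ := by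
  have hu : u ∈ _root_.ball G β := mem_ball_comm_s16.mp h₂.mem_ball
  rw [h₁.2] at hu
  refine hu.resolve_right fun huα => ?_
  have hα : α ∈ _root_.ball G u := mem_ball_comm_s16.mp huα
  rw [h₂.2] at hα
  have hαv : α ∈ _root_.ball G v := hα.resolve_left h₁.ne.symm
  exact h₂.1 (mem_ball_comm_s16.mp (h₁.ball_subset (mem_ball_comm_s16.mp hαv)))

lemma right_eq (h₁ : IsSoleSeparator G γ β α) (h₂ : IsSoleSeparator G α u v) : v = γ := by
  have hβ : β ∈ _root_.ball G u :=
    mem_ball_comm_s16.mp (h₁.ball_subset (mem_ball_comm_s16.mp h₂.mem_ball))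
  rw [h₂.2] at hβ
  have hv : v ∈ _root_.ball G β := mem_ball_comm_s16.mp (hβ.resolve_left h₁.ne)
  rw [h₁.2] at hv
  exact hv.resolve_right fun hvα => h₂.1 (mem_ball_comm_s16.mp hvα)

end IsSoleSeparator

lemma exists_isSoleSeparator_of_not_twinFree_induce (hG : TwinFree G) {z : V}
    (h : ¬ TwinFree (G.induce ({z}ᶜ : Set V))) : ∃ u v, IsSoleSeparator G z u v := by
  simp only [TwinFree, not_forall] at h
  obtain ⟨a, b, hab, hne⟩ := h
  have hdiff : _root_.ball G a ≠ _root_.ball G b := fun e => hne (Subtype.ext (hG _ _ e))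
  have hoff : _root_.ball G a \ {z} = _root_.ball G b \ {z} := by
    ext w
    by_cases hw : w = z
    · simp [hw]
    · simpa [hw, ball_induce] using Set.ext_iff.mp hab ⟨w, hw⟩
  by_cases ha : z ∈ _root_.ball G a <;> by_cases hb : z ∈ _root_.ball G b
  · exact (hdiff <| by
      rw [← Set.insert_sdiff_self_of_mem ha, hoff, Set.insert_sdiff_self_of_mem hb]).elim
  · exact ⟨a, b, hb, by rw [← Set.insert_sdiff_self_of_mem ha, hoff, Set.insert_sdiff_singleton]⟩
  · exact ⟨b, a, ha, by rw [← Set.insert_sdiff_self_of_mem hb, ← hoff, Set.insert_sdiff_singleton]⟩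
  · exact (hdiff <| by
      rw [← Set.sdiff_singleton_eq_self ha, hoff, Set.sdiff_singleton_eq_self hb]).elim

structure IsSeparatorLadder (G : SimpleGraph V) (X Y : ℕ → V) : Prop where
  sep_Y : ∀ n, IsSoleSeparator G (Y (n + 1)) (X n) (X (n + 1))
  sep_X : ∀ n, IsSoleSeparator G (X n) (Y (n + 1)) (Y n)

namespace IsSeparatorLadder

variable {X Y : ℕ → V} (h : IsSeparatorLadder G X Y)
include h

lemma antitone_ball_X : Antitone fun n => _root_.ball G (X n) :=
  antitone_nat_of_succ_le fun n => (h.sep_Y n).ball_subset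

lemma monotone_ball_Y : Monotone fun n => _root_.ball G (Y n) :=
  monotone_nat_of_le_succ fun n => (h.sep_X n).ball_subset

lemma X_mem_ball_X (i j : ℕ) : X j ∈ _root_.ball G (X i) := by
  rcases le_total i j with hij | hij
  · exact h.antitone_ball_X hij (self_mem_ball _)
  · exact mem_ball_comm_s16.mp (h.antitone_ball_X hij (self_mem_ball _))

lemma Y_mem_ball_Y (i j : ℕ) : Y j ∈ _root_.ball G (Y i) := by
  rcases le_total i j with hij | hij
  · exact mem_ball_comm_s16.mp (h.monotone_ball_Y hij (self_mem_ball _))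
  · exact h.monotone_ball_Y hij (self_mem_ball _)

lemma X_mem_ball_Y_iff {i j : ℕ} : X i ∈ _root_.ball G (Y j) ↔ i < j :=
  ⟨fun hij => not_le.mp fun hji => (h.sep_X i).1 (h.monotone_ball_Y hji hij),
    fun hij => h.monotone_ball_Y hij (h.sep_X i).mem_ball⟩

lemma mem_ball_sumElim_iff (p q : ℕ ⊕ ℕ) :
    Sum.elim X Y q ∈ _root_.ball G (Sum.elim X Y p) ↔ q ∈ _root_.ball AinfPlus p := by
  rcases p with i | i <;> rcases q with j | j
  · simp [h.X_mem_ball_X]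
  · simpa using _root_.mem_ball_comm_s16.trans h.X_mem_ball_Y_iff
  · simp [h.X_mem_ball_Y_iff]
  · simp [h.Y_mem_ball_Y]

end IsSeparatorLadder

section Ladder

variable {x : V}

lemma exists_isSoleSeparator_swap (hx : ∀ z ∈ _root_.ball G x, ∃ u v, IsSoleSeparator G z u v)
    {a c d : V} (h : IsSoleSeparator G a d c) (hd : d ∈ _root_.ball G x) :
    ∃ b, IsSoleSeparator G d a b := by
  obtain ⟨u, v, huv⟩ := hx d hd
  exact ⟨v, h.left_eq huv ▸ huv⟩

/-- `(a, b, c, d)` plays the role of `(Xₙ, Xₙ₊₁, Yₙ, Yₙ₊₁)` in the ladder. -/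
structure SeparatorLink (G : SimpleGraph V) (x : V) where
  (a b c d : V)
  sep_d : IsSoleSeparator G d a b
  sep_a : IsSoleSeparator G a d c
  ball_subset : _root_.ball G a ⊆ _root_.ball G x

namespace SeparatorLink

lemma exists_first (hx : ∀ z ∈ _root_.ball G x, ∃ u v, IsSoleSeparator G z u v) :
    Nonempty (SeparatorLink G x) := by
  obtain ⟨p, q, hpq⟩ := hx x (self_mem_ball x)
  obtain ⟨b, hb⟩ := exists_isSoleSeparator_swap hx hpq (mem_ball_comm_s16.mp hpq.mem_ball)
  exact ⟨⟨x, b, q, p, hb, hpq, subset_rfl⟩⟩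

lemma exists_next (hx : ∀ z ∈ _root_.ball G x, ∃ u v, IsSoleSeparator G z u v)
    (s : SeparatorLink G x) : ∃ t : SeparatorLink G x, t.a = s.b ∧ t.c = s.d := by
  have hsub : _root_.ball G s.b ⊆ _root_.ball G x := s.ball_subset.trans' s.sep_d.ball_subset
  obtain ⟨u, v, huv⟩ := hx s.b (hsub (self_mem_ball _))
  rw [s.sep_d.right_eq huv] at huv
  obtain ⟨b, hb⟩ := exists_isSoleSeparator_swap hx huv (hsub (mem_ball_comm_s16.mp huv.mem_ball))
  exact ⟨⟨s.b, b, s.d, u, hb, huv, hsub⟩, rfl, rfl⟩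

end SeparatorLink

lemma exists_isSeparatorLadder (hx : ∀ z ∈ _root_.ball G x, ∃ u v, IsSoleSeparator G z u v) :
    ∃ X Y : ℕ → V, IsSeparatorLadder G X Y := by
  obtain ⟨s₀⟩ := SeparatorLink.exists_first hx
  choose next hnext using SeparatorLink.exists_next hx
  refine ⟨fun n => (next^[n] s₀).a, fun n => (next^[n] s₀).c, ⟨fun n => ?_, fun n => ?_⟩⟩
  all_goals
    simp only [Function.iterate_succ_apply', (hnext _).1, (hnext _).2]
  exacts [(next^[n] s₀).sep_d, (next^[n] s₀).sep_a]

end Ladder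

end

theorem stmt16 {V : Type*} (G : SimpleGraph V) (hTF : TwinFree G)
    (hnoA : ¬ Nonempty (AinfPlus ↪g G)) :
    ∀ x : V, ∃ y ∈ _root_.ball G x, TwinFree (G.induce ({y}ᶜ : Set V)) := by
  intro x
  by_contra! hx
  obtain ⟨X, Y, hXY⟩ := exists_isSeparatorLadder fun z hz =>
    exists_isSoleSeparator_of_not_twinFree_induce hTF (hx z hz)
  exact hnoA ⟨embeddingOfMemBallIff twinFree_ainfPlus _ hXY.mem_ball_sumElim_iff⟩
end

section
/- Let G be a connected Δ-regular twin-free graph on n vertices with Δ ≥ 3. Then γ^ID(G) ≤ n·(1 − 1/(1 + Δ − Δ² + Δ³)). -/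
/-!
Take a maximal set `S` of vertices at pairwise distance at least 4. Every vertex is then within
distance 3 of `S`, and a ball of radius 3 in a `Δ`-regular graph has at most
`1 + Δ + Δ(Δ - 1) + Δ(Δ - 1)² = 1 + Δ - Δ² + Δ³` vertices, so `|S| ≥ n / (1 + Δ - Δ² + Δ³)`.
The complement of `S` is an identifying code. It dominates since `S` is independent. If
`N[x] ∖ S = N[y] ∖ S` with `x ≠ y`, then `N[x] ∖ N[y]` and `N[y] ∖ N[x]` lie in `S`, and they are
nonempty because the closed neighbourhoods are distinct and of equal size. When `x ~ y` this gives
two vertices of `S` at distance at most 3; otherwise `x` and `y` themselves lie in `S` and share a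
closed neighbour outside `S`.
-/

open SimpleGraph

open Finset

namespace SimpleGraph

variable {V : Type*} {G : SimpleGraph V}

lemma exists_adj_edist_eq_of_edist_eq_add_one {s v : V} {k : ℕ} (h : G.edist s v = k + 1) :
    ∃ u, G.Adj u v ∧ G.edist s u = k := by
  obtain ⟨p, hp⟩ := exists_walk_of_edist_eq_coe (k := k + 1) (by exact_mod_cast h)
  have hnil : ¬p.Nil := by simp [← Walk.length_eq_zero_iff, hp]
  refine ⟨p.penultimate, p.adj_penultimate hnil, le_antisymm ?_ ?_⟩
  · simpa [Walk.length_dropLast, hp] using G.edist_le p.dropLast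
  · have := h ▸ G.edist_triangle (v := p.penultimate) (w := v)
    rw [edist_eq_one_iff_adj.2 (p.adj_penultimate hnil)] at this
    exact (ENat.add_le_add_iff_right ENat.one_ne_top).1 this

variable [Fintype V]

variable (G) in
lemma exists_pairwise_lt_edist_forall_exists_edist_le (r : ℕ∞) :
    ∃ S : Finset V, (S : Set V).Pairwise (fun a b => r < G.edist a b) ∧
      ∀ v, ∃ s ∈ S, G.edist s v ≤ r := by
  classical
  let IsPacking : Finset V → Prop := fun S => (S : Set V).Pairwise (fun a b => r < G.edist a b)
  obtain ⟨S, hS, hmax⟩ :=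
    (Set.toFinite {S | IsPacking S}).exists_maximal ⟨∅, by simp [IsPacking]⟩
  refine ⟨S, hS, fun v => ?_⟩
  by_contra! hfar
  have hvS : v ∉ S := fun hv => by simpa using hfar v hv
  have hinsert : IsPacking (insert v S) := by
    simp only [IsPacking, coe_insert]
    refine hS.insert fun b hb _ => ⟨?_, hfar b hb⟩
    simpa [edist_comm] using hfar b hb
  exact hvS (hmax hinsert (subset_insert v S) (mem_insert_self v S))

lemma card_le_card_mul_of_forall_exists_edist_le {S : Finset V} {r : ℕ∞} {D : ℕ}
    (hcover : ∀ v, ∃ s ∈ S, G.edist s v ≤ r) (hball : ∀ s, #{v | G.edist s v ≤ r} ≤ D) :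
    Fintype.card V ≤ #S * D := by
  classical
  calc Fintype.card V ≤ #(S.biUnion fun s => {v | G.edist s v ≤ r}) := by
        rw [← card_univ]
        refine card_le_card fun v _ => ?_
        obtain ⟨s, hs, hsv⟩ := hcover v
        exact mem_biUnion.2 ⟨s, hs, mem_filter.2 ⟨mem_univ v, hsv⟩⟩
    _ ≤ #S * D := card_biUnion_le_card_mul _ _ _ fun s _ => hball s

variable [DecidableRel G.Adj] {Δ : ℕ}

lemma card_filter_edist_eq_add_two_le (hreg : G.IsRegularOfDegree Δ) (s : V) (k : ℕ) :
    #{v | G.edist s v = k + 1 + 1} ≤ (Δ - 1) * #{v | G.edist s v = k + 1} := by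
  classical
  have := card_mul_le_card_mul (fun v u => G.Adj v u) (m := 1) (n := Δ - 1)
    (s := {v | G.edist s v = k + 1 + 1}) (t := {v | G.edist s v = k + 1}) ?_ ?_
  · rwa [mul_one, mul_comm] at this
  · intro v hv
    obtain ⟨u, hadj, hu⟩ := exists_adj_edist_eq_of_edist_eq_add_one (mem_filter.1 hv).2
    exact Finset.one_le_card.2 ⟨u, by simp [bipartiteAbove, hadj.symm, hu]⟩
  · intro u hu
    obtain ⟨w, hadj, hw⟩ := exists_adj_edist_eq_of_edist_eq_add_one (by simpa using hu)
    calc #(bipartiteBelow _ _ u) ≤ #((G.neighborFinset u).erase w) := by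
          refine card_le_card fun v hv => ?_
          simp only [bipartiteBelow, mem_filter, mem_univ, true_and] at hv
          refine mem_erase.2 ⟨?_, (G.mem_neighborFinset u v).2 hv.2.symm⟩
          rintro rfl
          exact absurd (by exact_mod_cast hw.symm.trans hv.1 : k = k + 1 + 1) (by omega)
      _ = Δ - 1 := by
          rw [card_erase_of_mem ((G.mem_neighborFinset u w).2 hadj.symm),
            card_neighborFinset_eq_degree, hreg u]

lemma card_filter_edist_eq_add_one_le (hreg : G.IsRegularOfDegree Δ) (s : V) (k : ℕ) :
    #{v | G.edist s v = k + 1} ≤ Δ * (Δ - 1) ^ k := by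
  induction k with
  | zero =>
    have : ({v | G.edist s v = ((0 : ℕ) : ℕ∞) + 1} : Finset V) = G.neighborFinset s := by
      ext v; simp [edist_eq_one_iff_adj]
    rw [this, card_neighborFinset_eq_degree, hreg s, pow_zero, mul_one]
  | succ k ih =>
    push_cast
    calc _ ≤ (Δ - 1) * #{v | G.edist s v = k + 1} := card_filter_edist_eq_add_two_le hreg s k
      _ ≤ (Δ - 1) * (Δ * (Δ - 1) ^ k) := Nat.mul_le_mul_left _ ih
      _ = Δ * (Δ - 1) ^ (k + 1) := by ring

lemma card_filter_edist_le_le (hreg : G.IsRegularOfDegree Δ) (s : V) (r : ℕ) :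
    #{v | G.edist s v ≤ r} ≤ 1 + ∑ k ∈ range r, Δ * (Δ - 1) ^ k := by
  classical
  induction r with
  | zero =>
    have : ({v | G.edist s v ≤ ((0 : ℕ) : ℕ∞)} : Finset V) = {s} := by
      ext v
      simp only [mem_filter, mem_univ, true_and, mem_singleton, Nat.cast_zero, nonpos_iff_eq_zero,
        edist_eq_zero_iff]
      exact eq_comm
    rw [this, card_singleton]
    exact Nat.le_add_right 1 _
  | succ r ih =>
    calc #{v | G.edist s v ≤ ((r + 1 : ℕ) : ℕ∞)}
        ≤ #{v | G.edist s v ≤ r} + #{v | G.edist s v = r + 1} := by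
          have hsplit : ∀ v, G.edist s v ≤ r + 1 ↔ G.edist s v ≤ r ∨ G.edist s v = r + 1 :=
            fun v => by rw [le_iff_lt_or_eq, ENat.lt_natCast_add_one_iff]
          simp only [Nat.cast_add, Nat.cast_one, hsplit, filter_or]
          exact card_union_le _ _
      _ ≤ (1 + ∑ k ∈ range r, Δ * (Δ - 1) ^ k) + Δ * (Δ - 1) ^ r :=
          add_le_add ih (card_filter_edist_eq_add_one_le hreg s r)
      _ = 1 + ∑ k ∈ range (r + 1), Δ * (Δ - 1) ^ k := by rw [sum_range_succ, add_assoc]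

end SimpleGraph

section IdentifyingCode

variable {V : Type*} {G : SimpleGraph V}

lemma ball_eq_insert_neighborSet (x : V) : _root_.ball G x = insert x (G.neighborSet x) := rfl

lemma edist_le_one_of_mem_ball {x y : V} (h : y ∈ _root_.ball G x) : G.edist x y ≤ 1 :=
  edist_le_one_iff_adj_or_eq.2 (h.symm.imp id Eq.symm)

lemma ncard_ball [G.LocallyFinite] {Δ : ℕ} (hreg : G.IsRegularOfDegree Δ) (x : V) :
    (_root_.ball G x).ncard = Δ + 1 := by
  rw [ball_eq_insert_neighborSet, Set.ncard_insert_of_notMem G.notMem_neighborSet_self,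
    ← Nat.card_coe_set_eq, Nat.card_eq_fintype_card, card_neighborSet_eq_degree, hreg x]

lemma exists_mem_ball_notMem_ball [G.LocallyFinite] {Δ : ℕ} (hreg : G.IsRegularOfDegree Δ)
    (hTF : TwinFree G) {x y : V} (hxy : x ≠ y) : ∃ a ∈ _root_.ball G x, a ∉ _root_.ball G y := by
  by_contra! hsub
  refine hxy (hTF x y (Set.eq_of_subset_of_ncard_le hsub ?_ ((G.neighborSet y).toFinite.insert y)))
  rw [ncard_ball hreg, ncard_ball hreg]

lemma ball_inter_compl_nonempty_s18 {S : Set V} (hS : G.IsIndepSet S) {x y : V} (hxy : G.Adj x y) :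
    (_root_.ball G x ∩ Sᶜ).Nonempty := by
  by_cases hx : x ∈ S
  · exact ⟨y, Or.inr hxy, fun hy => hS hx hy hxy.ne hxy⟩
  · exact ⟨x, Or.inl rfl, hx⟩

lemma isSeparating_compl_of_pairwise_three_lt_edist [G.LocallyFinite] {Δ : ℕ}
    (hreg : G.IsRegularOfDegree Δ) (hTF : TwinFree G) {S : Set V}
    (hS : S.Pairwise (fun a b => 3 < G.edist a b))
    (hdom : ∀ x, (_root_.ball G x ∩ Sᶜ).Nonempty) : IsSeparating G Sᶜ := by
  intro x y hxy heq
  have mem_of_mem_ball : ∀ {a x y : V}, _root_.ball G x ∩ Sᶜ = _root_.ball G y ∩ Sᶜ →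
      a ∈ _root_.ball G x → a ∉ _root_.ball G y → a ∈ S :=
    fun h hax hay => by_contra fun haS => hay ((Set.ext_iff.1 h _).1 ⟨hax, haS⟩).1
  by_cases hadj : G.Adj x y
  · obtain ⟨a, hax, hay⟩ := exists_mem_ball_notMem_ball hreg hTF hxy
    obtain ⟨b, hby, hbx⟩ := exists_mem_ball_notMem_ball hreg hTF hxy.symm
    have hab : a ≠ b := by rintro rfl; exact hay hby
    have hfar := hS (mem_of_mem_ball heq hax hay) (mem_of_mem_ball heq.symm hby hbx) hab
    have hnear : G.edist a b ≤ 3 :=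
      calc G.edist a b ≤ G.edist a x + (G.edist x y + G.edist y b) :=
            G.edist_triangle.trans (by gcongr; exact G.edist_triangle)
        _ ≤ 1 + (1 + 1) := by
            gcongr
            · exact edist_comm (G := G) ▸ edist_le_one_of_mem_ball hax
            · exact (edist_eq_one_iff_adj.2 hadj).le
            · exact edist_le_one_of_mem_ball hby
        _ = 3 := by norm_num
    exact (hfar.trans_le hnear).false
  · have hxS := mem_of_mem_ball heq (Or.inl rfl) fun h => h.elim hxy fun h => hadj h.symm
    have hyS := mem_of_mem_ball heq.symm (Or.inl rfl) fun h => h.elim (hxy ·.symm) hadj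
    obtain ⟨c, hcx, hcS⟩ := hdom x
    have hcy : c ∈ _root_.ball G y := ((Set.ext_iff.1 heq c).1 ⟨hcx, hcS⟩).1
    have hnear : G.edist x y ≤ 2 :=
      calc G.edist x y ≤ G.edist x c + G.edist c y := G.edist_triangle
        _ ≤ 1 + 1 := by
            gcongr
            · exact edist_le_one_of_mem_ball hcx
            · exact edist_comm (G := G) ▸ edist_le_one_of_mem_ball hcy
        _ = 2 := by norm_num
    exact absurd ((hS hxS hyS hxy).trans_le hnear) (by norm_num)

lemma isIdCode_compl_of_pairwise_three_lt_edist [G.LocallyFinite] {Δ : ℕ}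
    (hreg : G.IsRegularOfDegree Δ) (hΔ : 0 < Δ) (hTF : TwinFree G) {S : Set V}
    (hS : S.Pairwise (fun a b => 3 < G.edist a b)) : IsIdCode G Sᶜ := by
  have hindep : G.IsIndepSet S := hS.mono' fun a b hab hadj => by
    rw [edist_eq_one_iff_adj.2 hadj] at hab
    norm_num at hab
  have hdom : ∀ x, (_root_.ball G x ∩ Sᶜ).Nonempty := fun x => by
    obtain ⟨y, hxy⟩ := G.degree_pos_iff_exists_adj x |>.1 (hreg x ▸ hΔ)
    exact ball_inter_compl_nonempty_s18 hindep hxy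
  exact ⟨hdom, isSeparating_compl_of_pairwise_three_lt_edist hreg hTF hS hdom⟩

lemma gammaID_le_ncard {C : Set V} (hC : IsIdCode G C) : gammaID G ≤ C.ncard :=
  Nat.sInf_le ⟨C, hC, rfl⟩

end IdentifyingCode

theorem stmt18_general {V : Type*} [Fintype V] (G : SimpleGraph V) [DecidableRel G.Adj]
    (hTF : TwinFree G) (Δ : ℕ)
    (hreg : G.IsRegularOfDegree Δ) (hΔ3 : 3 ≤ Δ) :
    (gammaID G : ℝ) ≤
      (Fintype.card V : ℝ) *
        (1 - 1 / (1 + (Δ : ℝ) - (Δ : ℝ) ^ 2 + (Δ : ℝ) ^ 3)) := by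
  classical
  obtain ⟨S, hpacking, hcover⟩ := G.exists_pairwise_lt_edist_forall_exists_edist_le 3
  have hγ : gammaID G + #S ≤ Fintype.card V := by
    have hcode := isIdCode_compl_of_pairwise_three_lt_edist hreg (by omega) hTF hpacking
    have := gammaID_le_ncard hcode
    rw [← coe_compl, Set.ncard_coe_finset, card_compl] at this
    have := S.card_le_univ
    omega
  have hcount : Fintype.card V ≤ #S * (1 + ∑ k ∈ range 3, Δ * (Δ - 1) ^ k) :=
    card_le_card_mul_of_forall_exists_edist_le (r := 3) hcover
      fun s => card_filter_edist_le_le hreg s 3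
  have hD : ((1 + ∑ k ∈ range 3, Δ * (Δ - 1) ^ k : ℕ) : ℝ) = 1 + Δ - Δ ^ 2 + Δ ^ 3 := by
    simp only [sum_range_succ, range_zero, sum_empty]
    push_cast [Nat.cast_sub (by omega : 1 ≤ Δ)]
    ring
  have hDpos : (0 : ℝ) < 1 + Δ - Δ ^ 2 + Δ ^ 3 := by rw [← hD]; positivity
  have hSlower : (Fintype.card V : ℝ) / (1 + Δ - Δ ^ 2 + Δ ^ 3) ≤ #S :=
    div_le_of_le_mul₀ hDpos.le (Nat.cast_nonneg _) (by rw [← hD]; exact_mod_cast hcount)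
  have hγ' : (gammaID G : ℝ) + #S ≤ Fintype.card V := by exact_mod_cast hγ
  rw [mul_one_sub, mul_one_div]
  linarith

theorem stmt18 {V : Type*} [Fintype V] (G : SimpleGraph V) [DecidableRel G.Adj]
    (hconn : G.Connected) (hTF : TwinFree G) (Δ : ℕ)
    (hreg : G.IsRegularOfDegree Δ) (hΔ3 : 3 ≤ Δ) :
    (gammaID G : ℝ) ≤
      (Fintype.card V : ℝ) *
        (1 - 1 / (1 + (Δ : ℝ) - (Δ : ℝ) ^ 2 + (Δ : ℝ) ^ 3)) :=
  stmt18_general G hTF Δ hreg hΔ3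
end
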